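/- arXiv:2502.09310 — 11 statements merged into one kernel-verified Lean document; each statement's English description precedes it below -/
import Mathlib

section
/- Suppose Assumption (A) holds. Then for every δ > 0 and α ∈ [0,1), the origin 0 ∈ ℝ² is globally asymptotically stable for the closed-loop system: (i) for every ε > 0 there exists η > 0 such that every continuously differentiable x = (x1,x2) : [0,∞) → ℝ² satisfying x1'(t) = b(g(x2(t))−1) + D*·g(x2(t))(1−e^{x1(t)}) and x2'(t) = p(x2(t))(D(x(t)) − D*·g(x2(t))·e^{x1(t)}) for all t ≥ 0 with ‖x(0)‖ < η satisfies ‖x(t)‖ < ε for all t ≥ 0; and (ii) every such solution satisfies x(t) → 0 as t → ∞. -/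
open Set Filter Real Topology

/-!
The `x₂`-equation has the sign of `-x₂`, so `x₂` moves monotonically towards `0` without
crossing it, and converges. The limit is `0`: otherwise the velocity of `x₂` stays bounded away
from zero, through the factor `e^{x₁} (e^{-x₂} - 1)` when the net growth rate
`b (g - 1) + D* g` is positive at the limit (this keeps `x₁` bounded below, and Assumption (A)
guarantees it for `x₂ ≥ 0`), and through the feedback term `δ b |g - 1|^{1+α}` when it is not.
Once `g(x₂) → 1`, the `x₁`-equation pushes `x₁` towards `0` at a uniform rate outside every
neighbourhood of `0`. The same estimate, with `g(x₂)` kept close to `1` by `|x₂(t)| ≤ |x₂(0)|`,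
gives stability.
-/

section ScalarComparison

variable {y y' : ℝ → ℝ}

theorem le_of_deriv_nonpos_above {t₀ c : ℝ} (hy : ∀ t ≥ t₀, HasDerivAt y (y' t) t)
    (hy' : ∀ t ≥ t₀, c < y t → y' t ≤ 0) (h₀ : y t₀ ≤ c) : ∀ t ≥ t₀, y t ≤ c := by
  intro t ht
  by_contra! hct
  set A := Icc t₀ t ∩ y ⁻¹' Iic c
  have hA : IsClosed A :=
    ContinuousOn.preimage_isClosed_of_isClosed
      (fun u hu => (hy u hu.1).continuousAt.continuousWithinAt) isClosed_Icc isClosed_Iic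
  have hbdd : BddAbove A := ⟨t, fun u hu => hu.1.2⟩
  have hs : sSup A ∈ A := hA.csSup_mem ⟨t₀, ⟨le_rfl, ht⟩, h₀⟩ hbdd
  set s := sSup A
  have hst : s < t := lt_of_le_of_ne hs.1.2 fun h => hct.not_ge (h ▸ hs.2)
  have hderiv : ∀ u ∈ Icc s t, HasDerivAt y (y' u) u := fun u hu => hy u (hs.1.1.trans hu.1)
  -- past the last time `s` at which `y ≤ c`, the derivative is nonpositive, so `y` cannot rise
  have hanti : AntitoneOn y (Icc s t) := by
    refine antitoneOn_of_deriv_nonpos (convex_Icc s t)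
      (fun u hu => (hderiv u hu).continuousAt.continuousWithinAt) ?_ ?_ <;> rw [interior_Icc]
    · exact fun u hu => (hderiv u (Ioo_subset_Icc_self hu)).differentiableAt.differentiableWithinAt
    · intro u hu
      rw [(hderiv u (Ioo_subset_Icc_self hu)).deriv]
      refine hy' u (hs.1.1.trans hu.1.le) (lt_of_not_ge fun hu' => hu.1.not_ge ?_)
      exact le_csSup hbdd ⟨⟨hs.1.1.trans hu.1.le, hu.2.le⟩, hu'⟩
  exact hct.not_ge ((hanti ⟨le_rfl, hst.le⟩ ⟨hst.le, le_rfl⟩ hst.le).trans hs.2)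

theorem ge_of_deriv_nonneg_below {t₀ c : ℝ} (hy : ∀ t ≥ t₀, HasDerivAt y (y' t) t)
    (hy' : ∀ t ≥ t₀, y t < c → 0 ≤ y' t) (h₀ : c ≤ y t₀) : ∀ t ≥ t₀, c ≤ y t := fun t ht =>
  neg_le_neg_iff.1 <| le_of_deriv_nonpos_above (y := -y) (y' := -y') (fun t ht => (hy t ht).neg)
    (fun t ht h => neg_nonpos.2 (hy' t ht (neg_lt_neg_iff.1 h))) (neg_le_neg h₀) t ht

theorem tendsto_atTop_of_le_deriv {k : ℝ} (hk : 0 < k)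
    (hy : ∀ᶠ t in atTop, HasDerivAt y (y' t) t ∧ k ≤ y' t) : Tendsto y atTop atTop := by
  obtain ⟨T, hT⟩ := eventually_atTop.1 hy
  have hlin : Tendsto (fun t => y T + k * (t - T)) atTop atTop :=
    tendsto_atTop_add_const_left _ _
      ((tendsto_atTop_add_const_right _ _ tendsto_id).const_mul_atTop hk)
  refine tendsto_atTop_mono' _ (eventually_atTop.2 ⟨T, fun t ht => ?_⟩) hlin
  have := (convex_Ici T).mul_sub_le_image_sub_of_le_deriv
    (fun u hu => (hT u hu).1.continuousAt.continuousWithinAt)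
    (fun u hu => (hT u (interior_subset hu)).1.differentiableAt.differentiableWithinAt)
    (fun u hu => (hT u (interior_subset hu)).1.deriv ▸ (hT u (interior_subset hu)).2)
    T self_mem_Ici t ht ht
  linarith

theorem tendsto_atBot_of_deriv_le_neg {k : ℝ} (hk : 0 < k)
    (hy : ∀ᶠ t in atTop, HasDerivAt y (y' t) t ∧ y' t ≤ -k) : Tendsto y atTop atBot :=
  tendsto_neg_atTop_iff.1 <| tendsto_atTop_of_le_deriv (y' := -y') hk
    (hy.mono fun _ h => ⟨h.1.neg, le_neg.2 h.2⟩)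

theorem eventually_le_of_deriv_le_neg {c k : ℝ} (hk : 0 < k)
    (hy : ∀ᶠ t in atTop, HasDerivAt y (y' t) t ∧ (c < y t → y' t ≤ -k)) :
    ∀ᶠ t in atTop, y t ≤ c := by
  obtain ⟨T, hT⟩ := eventually_atTop.1 hy
  obtain ⟨t₁, ht₁, hyt₁⟩ : ∃ t₁ ≥ T, y t₁ ≤ c := by
    by_contra! h
    have hbot := tendsto_atBot_of_deriv_le_neg hk
      (eventually_atTop.2 ⟨T, fun t ht => ⟨(hT t ht).1, (hT t ht).2 (h t ht)⟩⟩)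
    obtain ⟨t, hyt, ht⟩ :=
      ((hbot.eventually (eventually_le_atBot c)).and (eventually_ge_atTop T)).exists
    exact (h t ht).not_ge hyt
  exact eventually_atTop.2 ⟨t₁, le_of_deriv_nonpos_above (fun t ht => (hT t (ht₁.trans ht)).1)
    (fun t ht h => ((hT t (ht₁.trans ht)).2 h).trans (neg_nonpos.2 hk.le)) hyt₁⟩

theorem eventually_ge_of_le_deriv {c k : ℝ} (hk : 0 < k)
    (hy : ∀ᶠ t in atTop, HasDerivAt y (y' t) t ∧ (y t < c → k ≤ y' t)) :
    ∀ᶠ t in atTop, c ≤ y t :=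
  (eventually_le_of_deriv_le_neg (y := -y) (y' := -y') (c := -c) hk
    (hy.mono fun _ h => ⟨h.1.neg, fun h' => neg_le_neg (h.2 (neg_lt_neg_iff.1 h'))⟩)).mono
    fun _ h => neg_le_neg_iff.1 h

theorem tendsto_nhds_of_restoring_deriv {L : ℝ} (hy : ∀ᶠ t in atTop, HasDerivAt y (y' t) t)
    (h : ∀ ε > 0, ∃ k > 0,
      ∀ᶠ t in atTop, (L + ε < y t → y' t ≤ -k) ∧ (y t < L - ε → k ≤ y' t)) :
    Tendsto y atTop (𝓝 L) := by
  refine tendsto_order.2 ⟨fun a ha => ?_, fun a ha => ?_⟩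
  · obtain ⟨k, hk, hε⟩ := h ((L - a) / 2) (by linarith)
    filter_upwards [eventually_ge_of_le_deriv hk (hy.and (hε.mono fun _ h => h.2))] with t ht
    linarith
  · obtain ⟨k, hk, hε⟩ := h ((a - L) / 2) (by linarith)
    filter_upwards [eventually_le_of_deriv_le_neg hk (hy.and (hε.mono fun _ h => h.1))] with t ht
    linarith

theorem exists_eventually_le_of_sub_mul_exp_le_deriv {a B : ℝ} (ha : 0 < a) (hB : 0 < B)
    (hy : ∀ᶠ t in atTop, HasDerivAt y (y' t) t ∧ a - B * exp (y t) ≤ y' t) :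
    ∃ m, ∀ᶠ t in atTop, m ≤ y t := by
  obtain ⟨T, hT⟩ := eventually_atTop.1 hy
  refine ⟨min (y T) (log (a / B)), eventually_atTop.2 ⟨T, ge_of_deriv_nonneg_below
    (fun t ht => (hT t ht).1) (fun t ht h => ?_) (min_le_left _ _)⟩⟩
  have : B * exp (y t) < a := by
    rw [← lt_div_iff₀' hB, ← exp_log (div_pos ha hB)]
    exact exp_lt_exp.2 (h.trans_le (min_le_right _ _))
  linarith [(hT t ht).2]

theorem abs_le_abs_and_exists_tendsto_of_sign_deriv
    (hy : ∀ t ≥ 0, HasDerivAt y (y' t) t) (hpos : ∀ t ≥ 0, 0 ≤ y t → y' t ≤ 0)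
    (hneg : ∀ t ≥ 0, y t ≤ 0 → 0 ≤ y' t) :
    (∀ t ≥ 0, |y t| ≤ |y 0|) ∧ ∃ L, Tendsto y atTop (𝓝 L) := by
  wlog h₀ : 0 ≤ y 0 generalizing y y'
  · obtain ⟨habs, L, hL⟩ := this (y := -y) (y' := -y') (fun t ht => (hy t ht).neg)
      (fun t ht h => neg_nonpos.2 (hneg t ht (neg_nonneg.1 h)))
      (fun t ht h => neg_nonneg.2 (hpos t ht (neg_nonpos.1 h))) (neg_nonneg.2 (not_le.1 h₀).le)
    exact ⟨fun t ht => by simpa using habs t ht, -L, by simpa using hL.neg⟩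
  have hnonneg : ∀ t ≥ 0, 0 ≤ y t := ge_of_deriv_nonneg_below hy (fun t ht h => hneg t ht h.le) h₀
  have hanti : AntitoneOn y (Ici 0) := by
    refine antitoneOn_of_deriv_nonpos (convex_Ici 0)
      (fun u hu => (hy u hu).continuousAt.continuousWithinAt) ?_ ?_ <;> rw [interior_Ici]
    · exact fun u hu => (hy u (le_of_lt hu)).differentiableAt.differentiableWithinAt
    · exact fun u hu => (hy u (le_of_lt hu)).deriv ▸ hpos u hu.le (hnonneg u hu.le)
  refine ⟨fun t ht => ?_, ?_⟩
  · rw [abs_of_nonneg (hnonneg t ht), abs_of_nonneg h₀]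
    exact hanti self_mem_Ici ht ht
  · have hmono : Antitone fun t => y (max t 0) := fun s t hst =>
      hanti (le_max_right s 0) (le_max_right t 0) (max_le_max_right 0 hst)
    refine ⟨_, (tendsto_atTop_ciInf hmono ⟨0, ?_⟩).congr' ?_⟩
    · rintro _ ⟨t, rfl⟩
      exact hnonneg _ (le_max_right t 0)
    · exact eventually_atTop.2 ⟨0, fun t ht => congrArg y (max_eq_left ht)⟩

end ScalarComparison

theorem HasDerivAt.prod_fst {x : ℝ → ℝ × ℝ} {v : ℝ × ℝ} {t : ℝ} (h : HasDerivAt x v t) :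
    HasDerivAt (fun s => (x s).1) v.1 t := by
  simpa using h.hasFDerivAt.fst.hasDerivAt

theorem HasDerivAt.prod_snd {x : ℝ → ℝ × ℝ} {v : ℝ × ℝ} {t : ℝ} (h : HasDerivAt x v t) :
    HasDerivAt (fun s => (x s).2) v.2 t := by
  simpa using h.hasFDerivAt.snd.hasDerivAt

theorem exists_uniform_drift_bound (b : ℝ) {D ε : ℝ} (hD : 0 < D) (hε : 0 < ε) :
    ∃ θ > 0, ∀ γ w, |γ - 1| ≤ θ →
      (ε ≤ w → b * (γ - 1) + D * γ * (1 - exp w) ≤ -θ) ∧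
      (w ≤ -ε → θ ≤ b * (γ - 1) + D * γ * (1 - exp w)) := by
  set β := 1 - exp (-ε)
  have hβ : 0 < β := sub_pos.2 (exp_lt_one_iff.2 (neg_neg_iff_pos.2 hε))
  -- `|1 - e^w| ≥ β` both for `w ≥ ε` and for `w ≤ -ε`
  have hβ' : β ≤ exp ε - 1 := by
    have := exp_add ε (-ε)
    rw [add_neg_cancel, exp_zero] at this
    nlinarith [sq_nonneg (exp ε - 1), exp_pos ε]
  refine ⟨min (1 / 2) (D * β / (2 * (|b| + 1))), by positivity, fun γ w hγ => ?_⟩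
  set θ := min (1 / 2) (D * β / (2 * (|b| + 1)))
  have hθ : (|b| + 1) * θ ≤ D * β / 2 := by
    have := min_le_right (1 / 2) (D * β / (2 * (|b| + 1)))
    rw [le_div_iff₀ (by positivity)] at this
    linarith
  have hγ' : 1 / 2 ≤ γ := by
    linarith [(abs_le.1 hγ).1, min_le_left (1 / 2) (D * β / (2 * (|b| + 1)))]
  have hb : |b * (γ - 1)| ≤ |b| * θ :=
    abs_mul b (γ - 1) ▸ mul_le_mul_of_nonneg_left hγ (abs_nonneg b)
  constructor
  · intro hw
    have : D * β / 2 ≤ D * γ * (exp w - 1) := by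
      have := exp_le_exp.2 hw
      have := mul_le_mul hγ' (show β ≤ exp w - 1 by linarith) hβ.le (by linarith)
      nlinarith
    nlinarith [le_abs_self (b * (γ - 1))]
  · intro hw
    have : D * β / 2 ≤ D * γ * (1 - exp w) := by
      have := exp_le_exp.2 hw
      have := mul_le_mul hγ' (show β ≤ 1 - exp w by linarith) hβ.le (by linarith)
      nlinarith
    nlinarith [neg_abs_le (b * (γ - 1))]

/-- The closed-loop field: with `p = κ e^{-x₂} + 1` its `x₂`-component simplifies to
`D g e^{x₁} (e^{-x₂} - 1) + p · feedback`, and `ψ` stands for `p · feedback`. -/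
noncomputable def reducedField (b D : ℝ) (G ψ : ℝ → ℝ) (x : ℝ × ℝ) : ℝ × ℝ :=
  (b * (G x.2 - 1) + D * G x.2 * (1 - exp x.1), D * G x.2 * exp x.1 * (exp (-x.2) - 1) + ψ x.2)

section ReducedField

variable {b D : ℝ} {G ψ : ℝ → ℝ}

theorem snd_reducedField_nonpos (hG : ∀ z, 0 ≤ G z) (hD : 0 ≤ D) (hψ : ∀ z, 0 ≤ z → ψ z = 0)
    {x : ℝ × ℝ} (hx : 0 ≤ x.2) : (reducedField b D G ψ x).2 ≤ 0 := by
  have : exp (-x.2) - 1 ≤ 0 := sub_nonpos.2 (exp_le_one_iff.2 (neg_nonpos.2 hx))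
  have := mul_nonpos_of_nonneg_of_nonpos (mul_nonneg (mul_nonneg hD (hG x.2)) (exp_pos x.1).le) this
  simp only [reducedField, hψ x.2 hx]
  linarith

theorem snd_reducedField_nonneg (hG : ∀ z, 0 ≤ G z) (hD : 0 ≤ D) (hψ : ∀ z, 0 ≤ ψ z)
    {x : ℝ × ℝ} (hx : x.2 ≤ 0) : 0 ≤ (reducedField b D G ψ x).2 := by
  have : 0 ≤ exp (-x.2) - 1 := sub_nonneg.2 (one_le_exp_iff.2 (neg_nonneg.2 hx))
  have := mul_nonneg (mul_nonneg (mul_nonneg hD (hG x.2)) (exp_pos x.1).le) this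
  have := hψ x.2
  simp only [reducedField]
  linarith

theorem abs_snd_le_and_exists_tendsto_snd (hG : ∀ z, 0 ≤ G z) (hD : 0 ≤ D)
    (hψ_nonneg : ∀ z, 0 ≤ ψ z) (hψ_zero : ∀ z, 0 ≤ z → ψ z = 0) {x : ℝ → ℝ × ℝ}
    (hx : ∀ t, 0 ≤ t → HasDerivAt x (reducedField b D G ψ (x t)) t) :
    (∀ t ≥ 0, |(x t).2| ≤ |(x 0).2|) ∧ ∃ L, Tendsto (fun t => (x t).2) atTop (𝓝 L) :=
  abs_le_abs_and_exists_tendsto_of_sign_deriv (fun t ht => (hx t ht).prod_snd)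
    (fun _ _ h => snd_reducedField_nonpos hG hD hψ_zero h)
    (fun _ _ h => snd_reducedField_nonneg hG hD hψ_nonneg h)

theorem reducedField_stable (hD : 0 < D) (hG : ∀ z, 0 ≤ G z) (hG0 : G 0 = 1)
    (hG_cont : ContinuousAt G 0) (hψ_nonneg : ∀ z, 0 ≤ ψ z) (hψ_zero : ∀ z, 0 ≤ z → ψ z = 0) :
    ∀ ε > 0, ∃ η > 0, ∀ x : ℝ → ℝ × ℝ,
      (∀ t, 0 ≤ t → HasDerivAt x (reducedField b D G ψ (x t)) t) → ‖x 0‖ < η →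
      ∀ t, 0 ≤ t → ‖x t‖ < ε := by
  intro ε hε
  obtain ⟨θ, hθ, hdrift⟩ := exists_uniform_drift_bound b hD (half_pos hε)
  obtain ⟨η₁, hη₁, hG_near⟩ := Metric.continuousAt_iff.1 hG_cont θ hθ
  refine ⟨min (ε / 2) η₁, by positivity, fun x hx hx₀ t ht => ?_⟩
  have hw₀ : |(x 0).1| < min (ε / 2) η₁ := (norm_fst_le (x 0)).trans_lt hx₀
  have hz₀ : |(x 0).2| < min (ε / 2) η₁ := (norm_snd_le (x 0)).trans_lt hx₀
  have hz := (abs_snd_le_and_exists_tendsto_snd hG hD.le hψ_nonneg hψ_zero hx).1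
  have hγ : ∀ t ≥ 0, |G (x t).2 - 1| ≤ θ := fun t ht => by
    have := @hG_near (x t).2 (by
      rw [Real.dist_eq, sub_zero]; exact (hz t ht).trans_lt (hz₀.trans_le (min_le_right _ _)))
    rw [Real.dist_eq, hG0] at this
    exact this.le
  have hw := fun t (ht : t ≥ 0) => (hx t ht).prod_fst
  have hw_le := le_of_deriv_nonpos_above hw
    (fun t ht h => ((hdrift _ _ (hγ t ht)).1 h.le).trans (neg_nonpos.2 hθ.le))
    (by linarith [(abs_lt.1 hw₀).2, min_le_left (ε / 2) η₁])
  have hw_ge := ge_of_deriv_nonneg_below hw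
    (fun t ht h => hθ.le.trans ((hdrift _ _ (hγ t ht)).2 h.le))
    (by linarith [(abs_lt.1 hw₀).1, min_le_left (ε / 2) η₁])
  rw [Prod.norm_def, Real.norm_eq_abs, Real.norm_eq_abs]
  refine max_lt ((abs_le.2 ⟨hw_ge t ht, hw_le t ht⟩).trans_lt (half_lt_self hε)) ?_
  linarith [hz t ht, min_le_left (ε / 2) η₁]

theorem exists_eventually_le_fst (hD : 0 < D) (hG : Continuous G) (hG_pos : ∀ z, 0 < G z)
    {x : ℝ → ℝ × ℝ} (hx : ∀ t, 0 ≤ t → HasDerivAt x (reducedField b D G ψ (x t)) t) {L : ℝ}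
    (hL : Tendsto (fun t => (x t).2) atTop (𝓝 L)) (haL : 0 < b * (G L - 1) + D * G L) :
    ∃ m, ∀ᶠ t in atTop, m ≤ (x t).1 := by
  have hGL := hG_pos L
  refine exists_eventually_le_of_sub_mul_exp_le_deriv
    (y' := fun t => (reducedField b D G ψ (x t)).1) (half_pos haL)
    (by positivity : 0 < D * (2 * G L)) ?_
  have ha := (((by fun_prop : Continuous fun z => b * (G z - 1) + D * G z).tendsto L).comp
    hL).eventually (eventually_gt_nhds (half_lt_self haL))
  have hG_le :=
    ((hG.tendsto L).comp hL).eventually (eventually_lt_nhds (by linarith : G L < 2 * G L))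
  filter_upwards [eventually_ge_atTop 0, ha, hG_le] with t ht hat hGt
  simp only [Function.comp_apply] at hat hGt
  refine ⟨(hx t ht).prod_fst, ?_⟩
  have := mul_le_mul_of_nonneg_right hGt.le (mul_nonneg hD.le (exp_pos (x t).1).le)
  simp only [reducedField]
  nlinarith

theorem eq_zero_of_tendsto_snd (hD : 0 < D) (hG : Continuous G) (hG_pos : ∀ z, 0 < G z)
    (hψ : Continuous ψ) (hψ_nonneg : ∀ z, 0 ≤ ψ z) (hψ_zero : ∀ z, 0 ≤ z → ψ z = 0)
    (hψ_pos : ∀ z, b * (G z - 1) + D * G z ≤ 0 → 0 < ψ z) {x : ℝ → ℝ × ℝ}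
    (hx : ∀ t, 0 ≤ t → HasDerivAt x (reducedField b D G ψ (x t)) t) {L : ℝ}
    (hL : Tendsto (fun t => (x t).2) atTop (𝓝 L)) : L = 0 := by
  have hz : ∀ᶠ t in atTop, HasDerivAt (fun s => (x s).2) (reducedField b D G ψ (x t)).2 t :=
    eventually_atTop.2 ⟨0, fun t ht => (hx t ht).prod_snd⟩
  by_contra hL0
  rcases lt_or_ge 0 (b * (G L - 1) + D * G L) with haL | haL
  · -- `x₁` stays bounded below, so the coefficient `D g e^{x₁}` of `e^{-x₂} - 1` does too
    obtain ⟨m, hm⟩ := exists_eventually_le_fst hD hG hG_pos hx hL haL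
    have hGL := hG_pos L
    have hc : 0 < D * (G L / 2) * exp m := by positivity
    have hcoef : ∀ᶠ t in atTop, D * (G L / 2) * exp m ≤ D * G (x t).2 * exp (x t).1 := by
      filter_upwards [hm,
        ((hG.tendsto L).comp hL).eventually (eventually_gt_nhds (half_lt_self hGL))] with t hmt hGt
      exact mul_le_mul (mul_le_mul_of_nonneg_left hGt.le hD.le) (exp_le_exp.2 hmt) (exp_pos m).le
        (mul_nonneg hD.le (hG_pos _).le)
    have hβ := ((continuous_exp.comp continuous_neg).tendsto L).comp hL
    rcases lt_or_gt_of_ne hL0 with hLneg | hLpos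
    · have hβL : 0 < exp (-L) - 1 := sub_pos.2 (one_lt_exp_iff.2 (neg_pos.2 hLneg))
      refine not_tendsto_nhds_of_tendsto_atTop (tendsto_atTop_of_le_deriv
        (y' := fun t => (reducedField b D G ψ (x t)).2) (mul_pos hc (half_pos hβL)) ?_) L hL
      filter_upwards [hz, hcoef, hβ.eventually (eventually_gt_nhds
        (by linarith : (exp (-L) - 1) / 2 + 1 < exp (-L)))] with t hzt hct hβt
      refine ⟨hzt, ?_⟩
      simp only [Function.comp_apply] at hβt
      have := mul_le_mul hct (by linarith : (exp (-L) - 1) / 2 ≤ exp (-(x t).2) - 1)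
        (half_pos hβL).le (hc.le.trans hct)
      simp only [reducedField]
      linarith [hψ_nonneg (x t).2]
    · have hβL : exp (-L) - 1 < 0 := sub_neg.2 (exp_lt_one_iff.2 (neg_neg_iff_pos.2 hLpos))
      refine not_tendsto_nhds_of_tendsto_atBot (tendsto_atBot_of_deriv_le_neg
        (y' := fun t => (reducedField b D G ψ (x t)).2)
        (mul_pos hc (by linarith : 0 < -(exp (-L) - 1) / 2)) ?_) L hL
      filter_upwards [hz, hcoef, hβ.eventually (eventually_lt_nhds
        (by linarith : exp (-L) < (exp (-L) - 1) / 2 + 1)),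
        hL.eventually (eventually_gt_nhds hLpos)] with t hzt hct hβt hzpos
      refine ⟨hzt, ?_⟩
      simp only [Function.comp_apply] at hβt
      have := mul_le_mul_of_nonpos_right hct (by linarith : exp (-(x t).2) - 1 ≤ 0)
      have := mul_le_mul_of_nonneg_left hβt.le hc.le
      simp only [reducedField, hψ_zero _ hzpos.le]
      linarith
  · -- then `L < 0` and the feedback term alone pushes `x₂` up at a positive rate
    have hψL := hψ_pos L haL
    have hLneg : L < 0 := lt_of_not_ge fun h => (hψ_zero L h ▸ hψL).false
    refine not_tendsto_nhds_of_tendsto_atTop (tendsto_atTop_of_le_deriv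
      (y' := fun t => (reducedField b D G ψ (x t)).2) (half_pos hψL) ?_) L hL
    filter_upwards [hz, hL.eventually (eventually_lt_nhds hLneg),
      ((hψ.tendsto L).comp hL).eventually (eventually_gt_nhds (half_lt_self hψL))]
      with t hzt hzneg hψt
    refine ⟨hzt, ?_⟩
    have := mul_nonneg (mul_nonneg (mul_nonneg hD.le (hG_pos (x t).2).le) (exp_pos (x t).1).le)
      (sub_nonneg.2 (one_le_exp_iff.2 (neg_nonneg.2 hzneg.le)))
    simp only [Function.comp_apply] at hψt
    simp only [reducedField]
    linarith

theorem reducedField_tendsto_zero (hD : 0 < D) (hG : Continuous G) (hG_pos : ∀ z, 0 < G z)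
    (hG0 : G 0 = 1) (hψ : Continuous ψ) (hψ_nonneg : ∀ z, 0 ≤ ψ z)
    (hψ_zero : ∀ z, 0 ≤ z → ψ z = 0) (hψ_pos : ∀ z, b * (G z - 1) + D * G z ≤ 0 → 0 < ψ z)
    {x : ℝ → ℝ × ℝ} (hx : ∀ t, 0 ≤ t → HasDerivAt x (reducedField b D G ψ (x t)) t) :
    Tendsto x atTop (𝓝 0) := by
  obtain ⟨-, L, hL⟩ :=
    abs_snd_le_and_exists_tendsto_snd (fun z => (hG_pos z).le) hD.le hψ_nonneg hψ_zero hx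
  obtain rfl := eq_zero_of_tendsto_snd hD hG hG_pos hψ hψ_nonneg hψ_zero hψ_pos hx hL
  have hγ : Tendsto (fun t => G (x t).2) atTop (𝓝 1) := hG0 ▸ (hG.tendsto 0).comp hL
  have hw : Tendsto (fun t => (x t).1) atTop (𝓝 0) := by
    refine tendsto_nhds_of_restoring_deriv (eventually_atTop.2 ⟨0, fun t ht => (hx t ht).prod_fst⟩)
      fun ε hε => ?_
    obtain ⟨θ, hθ, hdrift⟩ := exists_uniform_drift_bound b hD hε
    refine ⟨θ, hθ, (Metric.tendsto_nhds.1 hγ θ hθ).mono fun t ht => ?_⟩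
    have := hdrift _ (x t).1 (Real.dist_eq _ _ ▸ ht).le
    exact ⟨fun h => this.1 (by linarith), fun h => this.2 (by linarith)⟩
  exact hw.prodMk_nhds hL

end ReducedField

noncomputable def feedback (g : ℝ → ℝ) (δ b α z : ℝ) : ℝ :=
  if z ≤ 0 then δ * b * |g z - 1| ^ (1 + α) else 0

section Feedback

variable {g : ℝ → ℝ} {δ b α : ℝ}

theorem feedback_nonneg (hδ : 0 ≤ δ) (hb : 0 ≤ b) (z : ℝ) : 0 ≤ feedback g δ b α z := by
  unfold feedback
  split_ifs
  · positivity
  · exact le_rfl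

theorem feedback_of_nonneg (hg0 : g 0 = 1) (hα : 0 < 1 + α) {z : ℝ} (hz : 0 ≤ z) :
    feedback g δ b α z = 0 := by
  unfold feedback
  split_ifs with h
  · rw [le_antisymm h hz, hg0, sub_self, abs_zero, zero_rpow hα.ne', mul_zero]
  · rfl

theorem feedback_pos (hδ : 0 < δ) (hb : 0 < b) {z : ℝ} (hz : z ≤ 0) (hgz : g z ≠ 1) :
    0 < feedback g δ b α z := by
  rw [feedback, if_pos hz]
  have := abs_pos.2 (sub_ne_zero.2 hgz)
  positivity

theorem continuous_feedback (hg : Continuous g) (hg0 : g 0 = 1) (hα : 0 < 1 + α) :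
    Continuous (feedback g δ b α) :=
  Continuous.if_le (continuous_const.mul ((continuous_abs.comp (hg.sub continuous_const)).rpow_const
    fun _ => Or.inr hα.le)) continuous_const continuous_id continuous_const
    fun z hz => by simp [hz, hg0, zero_rpow hα.ne']

theorem feedback_pos_of_net_nonpos (hδ : 0 < δ) (hb : 0 ≤ b) {D : ℝ} (hD : 0 < D)
    (hg : ∀ z, 0 < g z) (hnet : ∀ z, 0 ≤ z → 0 < b * (g z - 1) + D * g z) {z : ℝ}
    (hz : b * (g z - 1) + D * g z ≤ 0) : 0 < feedback g δ b α z := by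
  have hz0 : z ≤ 0 := le_of_not_ge fun h => (hnet z h).not_ge hz
  have hgz : g z ≠ 1 := fun h => by rw [h] at hz; linarith
  have hb' : b ≠ 0 := fun h => by rw [h] at hz; linarith [mul_pos hD (hg z)]
  exact feedback_pos hδ (lt_of_le_of_ne hb (Ne.symm hb')) hz0 hgz

end Feedback

theorem closedLoop_eq_reducedField {κ b Dstar δ α : ℝ} {p g : ℝ → ℝ} {D : ℝ × ℝ → ℝ}
    {F : ℝ × ℝ → ℝ × ℝ} (hp : ∀ z, p z = κ * exp (-z) + 1) (hp_pos : ∀ z, 0 < p z)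
    (hD : ∀ x : ℝ × ℝ, D x =
      (κ + 1) * Dstar * g x.2 * exp (x.1 - x.2) / p x.2 + feedback g δ b α x.2)
    (hF : ∀ x : ℝ × ℝ, F x =
      (b * (g x.2 - 1) + Dstar * g x.2 * (1 - exp x.1),
       p x.2 * (D x - Dstar * g x.2 * exp x.1))) :
    F = reducedField b Dstar g (fun z => p z * feedback g δ b α z) := by
  funext x
  rw [hF, hD, reducedField, Prod.mk.injEq]
  refine ⟨rfl, ?_⟩
  have := (hp_pos x.2).ne'
  rw [exp_sub, div_eq_mul_inv (exp x.1), ← exp_neg]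
  field_simp
  rw [hp]
  ring

theorem substrate_mem_Icc {S_in Sstar z : ℝ} (hS : Sstar ∈ Ioo 0 S_in) (hz : 0 ≤ z) :
    S_in / ((S_in - Sstar) / Sstar * exp (-z) + 1) ∈ Icc Sstar S_in := by
  obtain ⟨hS0, hSin⟩ := hS
  have hκ : 0 ≤ (S_in - Sstar) / Sstar := div_nonneg (sub_nonneg.2 hSin.le) hS0.le
  have hexp : exp (-z) ≤ 1 := exp_le_one_iff.2 (neg_nonpos.2 hz)
  constructor
  · rw [le_div_iff₀ (by positivity)]
    have := mul_le_mul_of_nonneg_left hexp hκ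
    have : Sstar * ((S_in - Sstar) / Sstar) = S_in - Sstar := by field_simp
    nlinarith
  · exact div_le_self (hS0.trans hSin).le (by have := exp_pos (-z); nlinarith)

theorem stmt_1_general
    (S_in Sstar p0 b Dstar : ℝ) (μ : ℝ → ℝ)
    (hSstar : Sstar ∈ Set.Ioo 0 S_in)
    (hb : 0 ≤ b) (hDstar : 0 < Dstar)
    (hμ_C1 : ContDiffOn ℝ 1 μ (Set.Ici 0))
    (hμ_pos : ∀ S, 0 < S → 0 < μ S)
    (heq : p0 * μ Sstar = b + Dstar)
    (κ : ℝ) (hκ : κ = (S_in - Sstar) / Sstar)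
    (p g : ℝ → ℝ)
    (hp : ∀ z, p z = κ * Real.exp (-z) + 1)
    (hg : ∀ z, g z = μ (S_in / p z) / μ Sstar)
    -- Assumption (A)
    (hA : ∀ S ∈ Set.Icc Sstar S_in, b < p0 * μ S)
    (δ α : ℝ) (hδ : 0 < δ) (hα : α ∈ Set.Ico (0 : ℝ) 1)
    -- feedback law
    (D : ℝ × ℝ → ℝ)
    (hD : ∀ x : ℝ × ℝ, D x =
      (κ + 1) * Dstar * g x.2 * Real.exp (x.1 - x.2) / p x.2 +
        (if x.2 ≤ 0 then δ * b * |g x.2 - 1| ^ (1 + α) else 0))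
    -- closed-loop vector field
    (F : ℝ × ℝ → ℝ × ℝ)
    (hF : ∀ x : ℝ × ℝ, F x =
      (b * (g x.2 - 1) + Dstar * g x.2 * (1 - Real.exp x.1),
       p x.2 * (D x - Dstar * g x.2 * Real.exp x.1))) :
    -- (i) Lyapunov stability
    (∀ ε > 0, ∃ η > 0, ∀ x : ℝ → ℝ × ℝ,
      (∀ t, 0 ≤ t → HasDerivAt x (F (x t)) t) → ‖x 0‖ < η →
      ∀ t, 0 ≤ t → ‖x t‖ < ε) ∧
    -- (ii) global attractivity
    (∀ x : ℝ → ℝ × ℝ,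
      (∀ t, 0 ≤ t → HasDerivAt x (F (x t)) t) →
      Filter.Tendsto x Filter.atTop (nhds (0 : ℝ × ℝ))) := by
  obtain ⟨hS0, hSin⟩ := hSstar
  have hp_pos : ∀ z, 0 < p z := fun z => by
    rw [hp, hκ]; have := div_pos (sub_pos.2 hSin) hS0; positivity
  have hp_cont : Continuous p := funext hp ▸ by fun_prop
  have hs_pos : ∀ z, 0 < S_in / p z := fun z => div_pos (hS0.trans hSin) (hp_pos z)
  have hg_pos : ∀ z, 0 < g z := fun z => hg z ▸ div_pos (hμ_pos _ (hs_pos z)) (hμ_pos _ hS0)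
  have hg0 : g 0 = 1 := by
    rw [hg, hp, hκ, neg_zero, exp_zero, mul_one, div_add_one hS0.ne', sub_add_cancel,
      div_div_cancel₀ (hS0.trans hSin).ne', div_self (hμ_pos _ hS0).ne']
  have hg_cont : Continuous g := funext hg ▸ (hμ_C1.continuousOn.comp_continuous
    (continuous_const.div hp_cont fun z => (hp_pos z).ne') fun z => (hs_pos z).le).div_const _
  have hnet : ∀ z, 0 ≤ z → 0 < b * (g z - 1) + Dstar * g z := fun z hz => by
    have hgrowth : b * (g z - 1) + Dstar * g z = p0 * μ (S_in / p z) - b := by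
      rw [hg]
      field_simp [(hμ_pos _ hS0).ne']
      linear_combination (-μ (S_in / p z)) * heq
    linarith [hA _ (hp z ▸ hκ ▸ substrate_mem_Icc ⟨hS0, hSin⟩ hz)]
  have hα' : 0 < 1 + α := by linarith [hα.1]
  have hψ_nonneg : ∀ z, 0 ≤ p z * feedback g δ b α z :=
    fun z => mul_nonneg (hp_pos z).le (feedback_nonneg hδ.le hb z)
  have hψ_zero : ∀ z, 0 ≤ z → p z * feedback g δ b α z = 0 :=
    fun z hz => by rw [feedback_of_nonneg hg0 hα' hz, mul_zero]
  rw [closedLoop_eq_reducedField hp hp_pos hD hF]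
  exact ⟨reducedField_stable hDstar (fun z => (hg_pos z).le) hg0 hg_cont.continuousAt hψ_nonneg
    hψ_zero, fun x hx => reducedField_tendsto_zero hDstar hg_cont hg_pos hg0
    (hp_cont.mul (continuous_feedback hg_cont hg0 hα')) hψ_nonneg hψ_zero
    (fun z hz => mul_pos (hp_pos z) (feedback_pos_of_net_nonpos hδ hb hDstar hg_pos hnet hz)) hx⟩

/-- Under Assumption (A), for every δ > 0 and α ∈ [0,1), the origin is
globally asymptotically stable for the closed-loop system. -/
theorem stmt_1
    (S_in Sstar p0 b Dstar : ℝ) (μ : ℝ → ℝ)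
    (hSin : 0 < S_in) (hSstar : Sstar ∈ Set.Ioo 0 S_in)
    (hp0 : 0 < p0) (hb : 0 ≤ b) (hDstar : 0 < Dstar)
    (hμ_bdd : BddAbove (Set.range μ))
    (hμ_C1 : ContDiffOn ℝ 1 μ (Set.Ici 0))
    (hμ_nonneg : ∀ S, 0 ≤ S → 0 ≤ μ S)
    (hμ_zero : μ 0 = 0) (hμ_pos : ∀ S, 0 < S → 0 < μ S)
    (heq : p0 * μ Sstar = b + Dstar)
    (κ : ℝ) (hκ : κ = (S_in - Sstar) / Sstar)
    (p g : ℝ → ℝ)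
    (hp : ∀ z, p z = κ * Real.exp (-z) + 1)
    (hg : ∀ z, g z = μ (S_in / p z) / μ Sstar)
    -- Assumption (A)
    (hA : ∀ S ∈ Set.Icc Sstar S_in, b < p0 * μ S)
    (δ α : ℝ) (hδ : 0 < δ) (hα : α ∈ Set.Ico (0 : ℝ) 1)
    -- feedback law
    (D : ℝ × ℝ → ℝ)
    (hD : ∀ x : ℝ × ℝ, D x =
      (κ + 1) * Dstar * g x.2 * Real.exp (x.1 - x.2) / p x.2 +
        (if x.2 ≤ 0 then δ * b * |g x.2 - 1| ^ (1 + α) else 0))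
    -- closed-loop vector field
    (F : ℝ × ℝ → ℝ × ℝ)
    (hF : ∀ x : ℝ × ℝ, F x =
      (b * (g x.2 - 1) + Dstar * g x.2 * (1 - Real.exp x.1),
       p x.2 * (D x - Dstar * g x.2 * Real.exp x.1))) :
    -- (i) Lyapunov stability
    (∀ ε > 0, ∃ η > 0, ∀ x : ℝ → ℝ × ℝ,
      (∀ t, 0 ≤ t → HasDerivAt x (F (x t)) t) → ‖x 0‖ < η →
      ∀ t, 0 ≤ t → ‖x t‖ < ε) ∧
    -- (ii) global attractivity
    (∀ x : ℝ → ℝ × ℝ,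
      (∀ t, 0 ≤ t → HasDerivAt x (F (x t)) t) →
      Filter.Tendsto x Filter.atTop (nhds (0 : ℝ × ℝ))) :=
  stmt_1_general S_in Sstar p0 b Dstar μ hSstar hb hDstar hμ_C1 hμ_pos heq κ hκ p g hp hg hA δ α hδ
    hα D hD F hF
end

section
/- Suppose Assumption (A) holds and α ∈ (0,1). Then the origin of the closed-loop system is locally exponentially stable: there exist constants ρ > 0, C > 0 and σ > 0 such that every continuously differentiable x = (x1,x2) : [0,∞) → ℝ² satisfying x1'(t) = b(g(x2(t))−1) + D*·g(x2(t))(1−e^{x1(t)}) and x2'(t) = p(x2(t))(D(x(t)) − D*·g(x2(t))·e^{x1(t)}) for all t ≥ 0 with ‖x(0)‖ ≤ ρ satisfies ‖x(t)‖ ≤ C·e^{−σt}·‖x(0)‖ for all t ≥ 0. -/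
/-
Near the origin `g (x₂) = 1 + O(x₂)`, and the feedback cancels the `κ`-dependence of the
`x₂`-equation, leaving `x₂' = D* g e^{x₁} (e^{-x₂} - 1)` plus a damping term pointing towards
`x₂ = 0`. Since `u (eᵘ - 1) ≥ (1 - e⁻¹) u²` on `[-1, 1]`, each equation is dissipative in its own
variable, and the only coupling, `b (g (x₂) - 1)` in the `x₁`-equation, is linear in `x₂`. For a
large weight `K` the Lyapunov function `V = x₁² + K x₂²` therefore satisfies `V' ≤ -λ V` near the
origin, and a barrier argument turns this into `V (t) ≤ V (0) e^{-λ t}`.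
-/

open Real Filter Topology Set

theorem le_mul_exp_of_hasDerivAt_le_neg_mul {V V' : ℝ → ℝ} {lam R : ℝ} (hlam : 0 ≤ lam)
    (hV : ∀ t, 0 ≤ t → HasDerivAt V (V' t) t)
    (hdecay : ∀ t, 0 ≤ t → V t ≤ R → V' t ≤ -lam * V t)
    (hV0 : 0 ≤ V 0) (hR : V 0 < R) {t : ℝ} (ht : 0 ≤ t) :
    V t ≤ V 0 * exp (-lam * t) := by
  -- The barrier `B η` is a strict supersolution of `V' = -lam V`, so `V` cannot cross it.
  set B : ℝ → ℝ → ℝ := fun η u => (V 0 + η * (1 + u)) * exp (-lam * u) with hB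
  have hB_deriv (η u : ℝ) : HasDerivAt (B η) (η * exp (-lam * u) - lam * B η u) u := by
    have h₁ : HasDerivAt (fun u => V 0 + η * (1 + u)) η u := by
      simpa using (((hasDerivAt_id u).const_add 1).const_mul η).const_add (V 0)
    have h₂ : HasDerivAt (fun u => exp (-lam * u)) (exp (-lam * u) * -lam) u := by
      simpa using ((hasDerivAt_id u).const_mul (-lam)).exp
    exact (h₁.mul h₂).congr_deriv (by simp only [hB]; ring)
  have hbarrier (η : ℝ) (hη : η ∈ Ioo 0 ((R - V 0) / (1 + t))) : V t ≤ B η t := by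
    have hηR : η * (1 + t) < R - V 0 := (lt_div_iff₀ (by linarith)).1 hη.2
    refine image_le_of_deriv_right_lt_deriv_boundary (a := 0) (f' := V')
      (fun u hu => (hV u hu.1).continuousAt.continuousWithinAt)
      (fun u hu => (hV u hu.1).hasDerivWithinAt) (by simpa [hB] using hη.1.le) (hB_deriv η) ?_
      ⟨ht, le_rfl⟩
    intro u hu hVB
    have hBR : B η u ≤ R := by
      have hexp : exp (-lam * u) ≤ 1 := exp_le_one_iff.2 (by nlinarith [hu.1])
      calc B η u ≤ V 0 + η * (1 + u) :=
            mul_le_of_le_one_right (by nlinarith [hη.1, hu.1]) hexp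
        _ ≤ R := by nlinarith [hη.1, hu.2]
    calc V' u ≤ -lam * B η u := hVB ▸ hdecay u hu.1 (hVB ▸ hBR)
      _ < η * exp (-lam * u) - lam * B η u := by linarith [mul_pos hη.1 (exp_pos (-lam * u))]
  have hlim : Tendsto (fun η => B η t) (𝓝[>] 0) (𝓝 (V 0 * exp (-lam * t))) := by
    have : Continuous fun η => B η t := by fun_prop
    simpa [hB] using (this.tendsto 0).mono_left nhdsWithin_le_nhds
  exact ge_of_tendsto hlim
    (eventually_of_mem (Ioo_mem_nhdsGT (div_pos (by linarith) (by linarith))) hbarrier)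

theorem mul_sq_le_mul_exp_sub_one {u : ℝ} (hu : |u| ≤ 1) :
    (1 - exp (-1)) * u ^ 2 ≤ u * (exp u - 1) := by
  obtain ⟨hu₁, hu₂⟩ := abs_le.1 hu
  have he : exp (-1) < 1 := exp_lt_one_iff.2 (by norm_num)
  rcases le_total 0 u with h | h
  · nlinarith [add_one_le_exp u, exp_pos (-1)]
  · -- `exp` lies below its chord on `[-1, 0]`
    have hconv := convexOn_exp.2 (mem_univ (-1)) (mem_univ 0) (neg_nonneg.2 h)
      (by linarith : (0:ℝ) ≤ 1 + u) (by ring)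
    simp only [smul_eq_mul, mul_zero, add_zero, exp_zero, mul_one] at hconv
    have : exp u ≤ -u * exp (-1) + (1 + u) := by simpa [neg_mul, mul_neg, neg_neg] using hconv
    nlinarith

def weightedSq (K : ℝ) (w : ℝ × ℝ) : ℝ := w.1 ^ 2 + K * w.2 ^ 2

theorem weightedSq_nonneg {K : ℝ} (hK : 0 ≤ K) (w : ℝ × ℝ) : 0 ≤ weightedSq K w := by
  unfold weightedSq; positivity

theorem sq_norm_le_weightedSq {K : ℝ} (hK : 1 ≤ K) (w : ℝ × ℝ) :
    ‖w‖ ^ 2 ≤ weightedSq K w := by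
  rw [Prod.norm_def, Real.norm_eq_abs, Real.norm_eq_abs, weightedSq]
  rcases le_total |w.1| |w.2| with h | h
  · rw [max_eq_right h, sq_abs]; nlinarith [sq_nonneg w.1, sq_nonneg w.2]
  · rw [max_eq_left h, sq_abs]; nlinarith [sq_nonneg w.2]

theorem weightedSq_le {K : ℝ} (hK : 0 ≤ K) (w : ℝ × ℝ) :
    weightedSq K w ≤ (1 + K) * ‖w‖ ^ 2 := by
  have h₁ : w.1 ^ 2 ≤ ‖w‖ ^ 2 := by
    simpa using pow_le_pow_left₀ (norm_nonneg _) (norm_fst_le w) 2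
  have h₂ : w.2 ^ 2 ≤ ‖w‖ ^ 2 := by
    simpa using pow_le_pow_left₀ (norm_nonneg _) (norm_snd_le w) 2
  unfold weightedSq; nlinarith

theorem HasDerivAt.weightedSq {x : ℝ → ℝ × ℝ} {v : ℝ × ℝ} {t : ℝ} (K : ℝ)
    (hx : HasDerivAt x v t) :
    HasDerivAt (fun s => weightedSq K (x s))
      (2 * ((x t).1 * v.1) + 2 * K * ((x t).2 * v.2)) t := by
  have h₁ : HasDerivAt (fun s => (x s).1) v.1 t := by simpa using hx.hasFDerivAt.fst.hasDerivAt
  have h₂ : HasDerivAt (fun s => (x s).2) v.2 t := by simpa using hx.hasFDerivAt.snd.hasDerivAt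
  exact ((h₁.pow 2).add ((h₂.pow 2).const_mul K)).congr_deriv (by push_cast; ring)

theorem add_mul_le_neg_min_mul {a c β K x y P Q : ℝ} (ha : 0 < a) (hc : 0 < c)
    (hK : β ^ 2 ≤ a * c * K) (hP : P ≤ β * |x| * |y| - a * x ^ 2) (hQ : Q ≤ -(c * y ^ 2)) :
    P + K * Q ≤ -(min a c / 2) * (x ^ 2 + K * y ^ 2) := by
  have hK0 : 0 ≤ K := nonneg_of_mul_nonneg_right (by nlinarith) (mul_pos ha hc)
  have hyoung : 2 * a * (β * |x| * |y|) ≤ a ^ 2 * x ^ 2 + a * c * K * y ^ 2 := by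
    nlinarith [sq_nonneg (a * |x| - β * |y|), sq_abs x, sq_abs y, sq_nonneg y]
  have hcross : β * |x| * |y| ≤ a / 2 * x ^ 2 + c * K / 2 * y ^ 2 := by
    nlinarith
  have hmin : min a c * (x ^ 2 + K * y ^ 2) ≤ a * x ^ 2 + c * K * y ^ 2 := by
    nlinarith [min_le_left a c, min_le_right a c, sq_nonneg x, mul_nonneg hK0 (sq_nonneg y)]
  nlinarith [mul_le_mul_of_nonneg_left hQ hK0]

theorem exists_exp_stable_of_weightedSq {F : ℝ × ℝ → ℝ × ℝ} {K lam r : ℝ} (hK : 1 ≤ K)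
    (hlam : 0 < lam) (hr : 0 < r)
    (hF : ∀ w : ℝ × ℝ, ‖w‖ ≤ r →
      2 * (w.1 * (F w).1) + 2 * K * (w.2 * (F w).2) ≤ -lam * weightedSq K w) :
    ∃ ρ > (0 : ℝ), ∃ C > (0 : ℝ), ∃ σ > (0 : ℝ), ∀ x : ℝ → ℝ × ℝ,
      (∀ t, 0 ≤ t → HasDerivAt x (F (x t)) t) → ‖x 0‖ ≤ ρ →
      ∀ t, 0 ≤ t → ‖x t‖ ≤ C * exp (-σ * t) * ‖x 0‖ := by
  have hK0 : 0 ≤ K := by linarith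
  refine ⟨r / (1 + K), by positivity, 1 + K, by positivity, lam / 2, by positivity, ?_⟩
  intro x hx hx0 t ht
  have hV0 : weightedSq K (x 0) ≤ (1 + K) * ‖x 0‖ ^ 2 := weightedSq_le hK0 _
  have hVr : weightedSq K (x 0) < r ^ 2 :=
    calc _ ≤ (1 + K) * (r / (1 + K)) ^ 2 := hV0.trans (by gcongr)
      _ = r ^ 2 / (1 + K) := by field_simp
      _ < r ^ 2 := div_lt_self (by positivity) (by linarith)
  have hdecay := le_mul_exp_of_hasDerivAt_le_neg_mul hlam.le
    (fun s hs => (hx s hs).weightedSq K)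
    (fun s _ hs => hF _ (le_of_sq_le_sq ((sq_norm_le_weightedSq hK _).trans hs) hr.le))
    (weightedSq_nonneg hK0 _) hVr ht
  have hexp : exp (-(lam / 2) * t) ^ 2 = exp (-lam * t) := by rw [sq, ← exp_add]; ring_nf
  refine le_of_sq_le_sq ?_ (by positivity)
  calc ‖x t‖ ^ 2 ≤ weightedSq K (x t) := sq_norm_le_weightedSq hK _
    _ ≤ weightedSq K (x 0) * exp (-lam * t) := hdecay
    _ ≤ (1 + K) * ‖x 0‖ ^ 2 * exp (-lam * t) := by gcongr
    _ ≤ (1 + K) ^ 2 * ‖x 0‖ ^ 2 * exp (-lam * t) := by gcongr; nlinarith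
    _ = ((1 + K) * exp (-(lam / 2) * t) * ‖x 0‖) ^ 2 := by rw [mul_pow, mul_pow, hexp]; ring

theorem one_sub_exp_neg_one_pos : 0 < 1 - exp (-1) := sub_pos.2 (exp_lt_one_iff.2 (by norm_num))

theorem mul_fst_closedLoop_le {b D γ x₁ : ℝ} (hb : 0 ≤ b) (hD : 0 ≤ D) (hγ : 1 / 2 ≤ γ)
    (hx₁ : |x₁| ≤ 1) :
    x₁ * (b * (γ - 1) + D * γ * (1 - exp x₁)) ≤
      b * |γ - 1| * |x₁| - D * (1 - exp (-1)) / 2 * x₁ ^ 2 := by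
  have hlin : x₁ * (b * (γ - 1)) ≤ b * |γ - 1| * |x₁| := by
    calc _ ≤ |x₁ * (b * (γ - 1))| := le_abs_self _
      _ = b * |γ - 1| * |x₁| := by rw [abs_mul, abs_mul, abs_of_nonneg hb]; ring
  have hexp := mul_le_mul_of_nonneg_left (mul_sq_le_mul_exp_sub_one hx₁)
    (by positivity : 0 ≤ D * γ)
  have hhalf : 0 ≤ D * (γ - 1 / 2) * ((1 - exp (-1)) * x₁ ^ 2) :=
    mul_nonneg (mul_nonneg hD (by linarith))
      (mul_nonneg one_sub_exp_neg_one_pos.le (sq_nonneg _))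
  nlinarith

theorem mul_snd_closedLoop_le {D γ x₁ x₂ e : ℝ} (hD : 0 ≤ D) (hγ : 1 / 2 ≤ γ)
    (hx₁ : |x₁| ≤ 1) (hx₂ : |x₂| ≤ 1) (he : x₂ * e ≤ 0) :
    x₂ * (D * γ * exp x₁ * (exp (-x₂) - 1) + e) ≤
      -(D * exp (-1) * (1 - exp (-1)) / 2 * x₂ ^ 2) := by
  have hexp := mul_sq_le_mul_exp_sub_one (u := -x₂) (by rwa [abs_neg])
  have hgain : D * exp (-1) / 2 ≤ D * γ * exp x₁ := by
    have : exp (-1) ≤ exp x₁ := exp_le_exp.2 (abs_le.1 hx₁).1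
    have : exp (-1) / 2 ≤ γ * exp x₁ := by nlinarith [exp_pos (-1)]
    nlinarith
  have := mul_le_mul hgain hexp (mul_nonneg one_sub_exp_neg_one_pos.le (sq_nonneg _))
    (by positivity)
  nlinarith

-- `e` is the extra damping that the feedback adds to the `x₂`-equation on `x₂ ≤ 0`.
noncomputable def closedLoopField (b Dstar : ℝ) (g : ℝ → ℝ) (e : ℝ × ℝ → ℝ) (w : ℝ × ℝ) :
    ℝ × ℝ :=
  (b * (g w.2 - 1) + Dstar * g w.2 * (1 - exp w.1),
    Dstar * g w.2 * exp w.1 * (exp (-w.2) - 1) + e w)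

theorem exists_weightedSq_decay_closedLoopField {b Dstar : ℝ} {g : ℝ → ℝ} {e : ℝ × ℝ → ℝ}
    (hb : 0 ≤ b) (hD : 0 < Dstar) (hg0 : g 0 = 1) (hg : DifferentiableAt ℝ g 0)
    (he : ∀ w : ℝ × ℝ, w.2 * e w ≤ 0) :
    ∃ K ≥ (1 : ℝ), ∃ lam > (0 : ℝ), ∃ r > (0 : ℝ), ∀ w : ℝ × ℝ, ‖w‖ ≤ r →
      2 * (w.1 * (closedLoopField b Dstar g e w).1) +
        2 * K * (w.2 * (closedLoopField b Dstar g e w).2) ≤ -lam * weightedSq K w := by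
  obtain ⟨L, hL⟩ := hg.hasDerivAt.isBigO_sub.bound
  have hnear : ∀ᶠ z in 𝓝 (0 : ℝ), |g z - 1| ≤ L * |z| ∧ 1 / 2 ≤ g z ∧ |z| ≤ 1 := by
    have hcont : ∀ᶠ z in 𝓝 (0 : ℝ), g z ∈ Metric.closedBall 1 (1 / 2) :=
      hg.continuousAt.eventually_mem
        (by rw [hg0]; exact Metric.closedBall_mem_nhds _ (by norm_num))
    filter_upwards [hL, hcont, Metric.closedBall_mem_nhds (0 : ℝ) one_pos] with z hz hgz hz1
    rw [Metric.mem_closedBall, Real.dist_eq] at hgz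
    exact ⟨by simpa [hg0] using hz, by linarith [(abs_le.1 hgz).1], by simpa using hz1⟩
  obtain ⟨r, hr, hball⟩ := Metric.nhds_basis_closedBall.eventually_iff.1 hnear
  have hr1 : r ≤ 1 := by
    simpa [abs_of_pos hr] using (hball (x := r) (by simp [abs_of_pos hr])).2.2
  set a := Dstar * (1 - exp (-1)) / 2
  set c := Dstar * exp (-1) * (1 - exp (-1)) / 2
  have ha : 0 < a := by have := one_sub_exp_neg_one_pos; positivity
  have hc : 0 < c := by have := one_sub_exp_neg_one_pos; positivity
  set K := max 1 ((b * L) ^ 2 / (a * c))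
  have hK : (b * L) ^ 2 ≤ a * c * K := by
    have := le_max_right 1 ((b * L) ^ 2 / (a * c))
    rw [div_le_iff₀ (by positivity)] at this
    linarith
  refine ⟨K, le_max_left _ _, min a c, lt_min ha hc, r, hr, fun w hw => ?_⟩
  have hx₁ : |w.1| ≤ r := (norm_fst_le w).trans hw
  have hx₂ : |w.2| ≤ r := (norm_snd_le w).trans hw
  obtain ⟨hgL, hg_half, -⟩ := hball (x := w.2) (by simpa using hx₂)
  have hP : w.1 * (closedLoopField b Dstar g e w).1 ≤ b * |g w.2 - 1| * |w.1| - a * w.1 ^ 2 :=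
    mul_fst_closedLoop_le hb hD.le hg_half (hx₁.trans hr1)
  have hQ : w.2 * (closedLoopField b Dstar g e w).2 ≤ -(c * w.2 ^ 2) :=
    mul_snd_closedLoop_le hD.le hg_half (hx₁.trans hr1) (hx₂.trans hr1) (he w)
  have hcross : b * |g w.2 - 1| * |w.1| ≤ b * L * |w.1| * |w.2| := by
    have := mul_le_mul_of_nonneg_left hgL hb
    nlinarith [abs_nonneg w.1]
  have := add_mul_le_neg_min_mul (x := w.1) (y := w.2) ha hc hK (hP.trans (by linarith)) hQ
  rw [weightedSq]
  linarith

theorem stmt_2_general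
    (S_in Sstar b Dstar : ℝ) (μ : ℝ → ℝ)
    (hSstar : Sstar ∈ Set.Ioo 0 S_in)
    (hb : 0 ≤ b) (hDstar : 0 < Dstar)
    (hμ_C1 : ContDiffOn ℝ 1 μ (Set.Ici 0))
    (hμ_pos : ∀ S, 0 < S → 0 < μ S)
    (κ : ℝ) (hκ : κ = (S_in - Sstar) / Sstar)
    (p g : ℝ → ℝ)
    (hp : ∀ z, p z = κ * Real.exp (-z) + 1)
    (hg : ∀ z, g z = μ (S_in / p z) / μ Sstar)
    (δ α : ℝ) (hδ : 0 < δ)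
    -- feedback law
    (D : ℝ × ℝ → ℝ)
    (hD : ∀ x : ℝ × ℝ, D x =
      (κ + 1) * Dstar * g x.2 * Real.exp (x.1 - x.2) / p x.2 +
        (if x.2 ≤ 0 then δ * b * |g x.2 - 1| ^ (1 + α) else 0))
    -- closed-loop vector field
    (F : ℝ × ℝ → ℝ × ℝ)
    (hF : ∀ x : ℝ × ℝ, F x =
      (b * (g x.2 - 1) + Dstar * g x.2 * (1 - Real.exp x.1),
       p x.2 * (D x - Dstar * g x.2 * Real.exp x.1))) :
    ∃ ρ > (0 : ℝ), ∃ C > (0 : ℝ), ∃ σ > (0 : ℝ), ∀ x : ℝ → ℝ × ℝ,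
      (∀ t, 0 ≤ t → HasDerivAt x (F (x t)) t) → ‖x 0‖ ≤ ρ →
      ∀ t, 0 ≤ t → ‖x t‖ ≤ C * Real.exp (-σ * t) * ‖x 0‖ := by
  obtain ⟨hS0, hSlt⟩ := hSstar
  have hκ0 : 0 < κ := hκ ▸ div_pos (sub_pos.2 hSlt) hS0
  have hp_pos (z : ℝ) : 0 < p z := by rw [hp]; positivity
  have hp0 : S_in / p 0 = Sstar := by rw [hp, neg_zero, exp_zero, hκ]; field_simp; ring
  have hg0 : g 0 = 1 := by rw [hg, hp0, div_self (hμ_pos _ hS0).ne']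
  have hg_diff : DifferentiableAt ℝ g 0 := by
    have hμ : DifferentiableAt ℝ μ (S_in / p 0) :=
      hp0 ▸ (hμ_C1.contDiffAt (Ici_mem_nhds hS0)).differentiableAt one_ne_zero
    have hp_diff : DifferentiableAt ℝ p 0 := by rw [funext hp]; fun_prop
    rw [funext hg]
    exact (hμ.comp 0 ((differentiableAt_const _).div hp_diff (hp_pos 0).ne')).div_const _
  set e : ℝ × ℝ → ℝ := fun w => p w.2 * if w.2 ≤ 0 then δ * b * |g w.2 - 1| ^ (1 + α) else 0
  have hF_eq (w : ℝ × ℝ) : F w = closedLoopField b Dstar g e w := by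
    rw [hF, hD, closedLoopField]
    congr 1
    have := hp_pos w.2
    simp only [e]
    field_simp
    rw [hp, exp_sub, exp_neg]
    field_simp
    ring
  have he (w : ℝ × ℝ) : w.2 * e w ≤ 0 := by
    simp only [e]
    split_ifs with h
    · exact mul_nonpos_of_nonpos_of_nonneg h (by have := hp_pos w.2; positivity)
    · simp
  obtain ⟨K, hK, lam, hlam, r, hr, hV⟩ :=
    exists_weightedSq_decay_closedLoopField hb hDstar hg0 hg_diff he
  exact funext hF_eq ▸ exists_exp_stable_of_weightedSq hK hlam hr hV

/-- Under Assumption (A) and α ∈ (0,1), the origin of the closed-loop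
system is locally exponentially stable. -/
theorem stmt_2
    (S_in Sstar p0 b Dstar : ℝ) (μ : ℝ → ℝ)
    (hSin : 0 < S_in) (hSstar : Sstar ∈ Set.Ioo 0 S_in)
    (hp0 : 0 < p0) (hb : 0 ≤ b) (hDstar : 0 < Dstar)
    (hμ_bdd : BddAbove (Set.range μ))
    (hμ_C1 : ContDiffOn ℝ 1 μ (Set.Ici 0))
    (hμ_nonneg : ∀ S, 0 ≤ S → 0 ≤ μ S)
    (hμ_zero : μ 0 = 0) (hμ_pos : ∀ S, 0 < S → 0 < μ S)
    (heq : p0 * μ Sstar = b + Dstar)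
    (κ : ℝ) (hκ : κ = (S_in - Sstar) / Sstar)
    (p g : ℝ → ℝ)
    (hp : ∀ z, p z = κ * Real.exp (-z) + 1)
    (hg : ∀ z, g z = μ (S_in / p z) / μ Sstar)
    -- Assumption (A)
    (hA : ∀ S ∈ Set.Icc Sstar S_in, b < p0 * μ S)
    (δ α : ℝ) (hδ : 0 < δ) (hα : α ∈ Set.Ioo (0 : ℝ) 1)
    -- feedback law
    (D : ℝ × ℝ → ℝ)
    (hD : ∀ x : ℝ × ℝ, D x =
      (κ + 1) * Dstar * g x.2 * Real.exp (x.1 - x.2) / p x.2 +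
        (if x.2 ≤ 0 then δ * b * |g x.2 - 1| ^ (1 + α) else 0))
    -- closed-loop vector field
    (F : ℝ × ℝ → ℝ × ℝ)
    (hF : ∀ x : ℝ × ℝ, F x =
      (b * (g x.2 - 1) + Dstar * g x.2 * (1 - Real.exp x.1),
       p x.2 * (D x - Dstar * g x.2 * Real.exp x.1))) :
    ∃ ρ > (0 : ℝ), ∃ C > (0 : ℝ), ∃ σ > (0 : ℝ), ∀ x : ℝ → ℝ × ℝ,
      (∀ t, 0 ≤ t → HasDerivAt x (F (x t)) t) → ‖x 0‖ ≤ ρ →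
      ∀ t, 0 ≤ t → ‖x t‖ ≤ C * Real.exp (-σ * t) * ‖x 0‖ :=
  stmt_2_general S_in Sstar b Dstar μ hSstar hb hDstar hμ_C1 hμ_pos κ hκ p g hp hg δ α hδ D hD F hF
end

section
/- For every δ > 0, α ∈ [0,1) and R > 0, the function Q : ℝ → ℝ defined by Q(z) := (1/2)z² + (b/(2D*δ))·∫_z^0 |g(s)−1|^{1−α}/(p(s)·g(s)) ds for z ≤ 0 and Q(z) := R·∫_0^z (e^s/g(s)²)(e^s−1) ds for z > 0 is differentiable on ℝ with Q'(0) = 0, satisfies Q(0) = 0 and Q(z) > 0 for z ≠ 0, and Q(z) → +∞ as |z| → ∞; consequently, the function V(x1,x2) := e^{x1} − x1 − 1 + Q(x2) satisfies V(0,0) = 0, V(x) > 0 for all x ∈ ℝ² \ {0}, and V(x) → +∞ as ‖x‖ → ∞. -/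
/-!
`Q` is glued at `0` from two branches whose derivatives there are `0 - c·h(0)` and `R·k(0)`;
both integrands vanish at `0` (because `g 0 = 1` and `e⁰ - 1 = 0`), so `Q` is differentiable
with `Q'(0) = 0`. For `z ≤ 0` the integral term is nonnegative, so `Q z ≥ z²/2`. For `z > 0` the
integrand is positive, and since `g ≤ sup μ / μ(S*) =: M` it is at least `1/M²` on `[1, ∞)`, so
`Q` grows at least linearly. Finally `V` is the sum of `e^{x₁} - x₁ - 1 ≥ |x₁| - 2` and `Q(x₂)`,
two nonnegative coercive functions of separate variables that vanish only at `0`.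
-/

open Filter Topology Set Real

section Gluing

variable {F G : ℝ → ℝ} {a f' : ℝ}

theorem hasDerivAt_ite_le (hF : HasDerivAt F f' a) (hG : HasDerivAt G f' a) (hFG : F a = G a) :
    HasDerivAt (fun z => if z ≤ a then F z else G z) f' a := by
  have hleft : HasDerivWithinAt (fun z => if z ≤ a then F z else G z) f' (Iic a) a :=
    hF.hasDerivWithinAt.congr (fun z hz => if_pos hz) (if_pos le_rfl)
  have hright : HasDerivWithinAt (fun z => if z ≤ a then F z else G z) f' (Ici a) a :=
    hG.hasDerivWithinAt.congr
      (fun z hz => by rcases (mem_Ici.1 hz).eq_or_lt with rfl | hz <;> simp [*, not_le.2])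
      (by simp [hFG])
  simpa [Iic_union_Ici] using hleft.union hright

theorem differentiable_ite_le (hF : Differentiable ℝ F) (hG : Differentiable ℝ G)
    (hFG : F a = G a) (hd : deriv F a = deriv G a) :
    Differentiable ℝ (fun z => if z ≤ a then F z else G z) := by
  intro z
  rcases lt_trichotomy z a with hz | rfl | hz
  · exact (hF z).congr_of_eventuallyEq <|
      eventually_of_mem (Iio_mem_nhds hz) fun x hx => if_pos hx.le
  · exact (hasDerivAt_ite_le (hF z).hasDerivAt (hd ▸ (hG z).hasDerivAt) hFG).differentiableAt
  · exact (hG z).congr_of_eventuallyEq <|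
      eventually_of_mem (Ioi_mem_nhds hz) fun x hx => if_neg (not_le.2 hx)

end Gluing

theorem tendsto_integral_atTop_of_le {k : ℝ → ℝ} {a m : ℝ} (hk : Continuous k) (hm : 0 < m)
    (hkm : ∀ s, a ≤ s → m ≤ k s) :
    Tendsto (fun z => ∫ s in a..z, k s) atTop atTop := by
  have hlin : Tendsto (fun z => m * (z - a)) atTop atTop :=
    (tendsto_atTop_add_const_right _ (-a) tendsto_id).const_mul_atTop hm
  refine tendsto_atTop_mono' _ ((eventually_ge_atTop a).mono fun z hz => ?_) hlin
  simpa [mul_comm] using intervalIntegral.integral_mono_on hz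
    (intervalIntegrable_const (μ := MeasureTheory.volume)) (hk.intervalIntegrable a z)
    fun s hs => hkm s hs.1

noncomputable def gluedLyapunov (c R : ℝ) (h k : ℝ → ℝ) (z : ℝ) : ℝ :=
  if z ≤ 0 then 1 / 2 * z ^ 2 + c * ∫ s in z..0, h s else R * ∫ s in 0..z, k s

namespace gluedLyapunov

variable {c R : ℝ} {h k : ℝ → ℝ}

theorem apply_zero : gluedLyapunov c R h k 0 = 0 := by
  simp [gluedLyapunov]

theorem hasDerivAt_left (hh : Continuous h) (z : ℝ) :
    HasDerivAt (fun z => 1 / 2 * z ^ 2 + c * ∫ s in z..0, h s) (z - c * h z) z := by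
  have hint : HasDerivAt (fun z => ∫ s in z..0, h s) (-h z) z :=
    intervalIntegral.integral_hasDerivAt_left (hh.intervalIntegrable z 0)
      (hh.stronglyMeasurableAtFilter _ _) hh.continuousAt
  exact (((hasDerivAt_pow 2 z).const_mul (1 / 2)).add (hint.const_mul c)).congr_deriv (by ring)

theorem hasDerivAt_right (hk : Continuous k) (z : ℝ) :
    HasDerivAt (fun z => R * ∫ s in 0..z, k s) (R * k z) z :=
  (hk.integral_hasStrictDerivAt 0 z).hasDerivAt.const_mul R

theorem hasDerivAt_zero (hh : Continuous h) (hk : Continuous k) (hh₀ : h 0 = 0)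
    (hk₀ : k 0 = 0) :
    HasDerivAt (gluedLyapunov c R h k) 0 0 := by
  refine hasDerivAt_ite_le ?_ ?_ (by simp)
  · simpa [hh₀] using hasDerivAt_left (c := c) hh 0
  · simpa [hk₀] using hasDerivAt_right (R := R) hk 0

theorem differentiable (hh : Continuous h) (hk : Continuous k) (hh₀ : h 0 = 0)
    (hk₀ : k 0 = 0) :
    Differentiable ℝ (gluedLyapunov c R h k) :=
  differentiable_ite_le (fun z => (hasDerivAt_left hh z).differentiableAt)
    (fun z => (hasDerivAt_right hk z).differentiableAt) (by simp)
    (by rw [(hasDerivAt_left hh 0).deriv, (hasDerivAt_right hk 0).deriv, hh₀, hk₀]; simp)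

theorem half_sq_le (hc : 0 ≤ c) (hh : ∀ s, 0 ≤ h s) {z : ℝ} (hz : z ≤ 0) :
    1 / 2 * z ^ 2 ≤ gluedLyapunov c R h k z := by
  rw [gluedLyapunov, if_pos hz]
  exact le_add_of_nonneg_right <|
    mul_nonneg hc (intervalIntegral.integral_nonneg hz fun s _ => hh s)

theorem pos (hc : 0 ≤ c) (hR : 0 < R) (hh : ∀ s, 0 ≤ h s) (hk : Continuous k)
    (hk_pos : ∀ s, 0 < s → 0 < k s) {z : ℝ} (hz : z ≠ 0) :
    0 < gluedLyapunov c R h k z := by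
  rcases hz.lt_or_gt with hz | hz
  · exact (by positivity : (0 : ℝ) < 1 / 2 * z ^ 2).trans_le (half_sq_le hc hh hz.le)
  · rw [gluedLyapunov, if_neg (not_le.2 hz)]
    exact mul_pos hR <| intervalIntegral.intervalIntegral_pos_of_pos_on
      (hk.intervalIntegrable 0 z) (fun s hs => hk_pos s hs.1) hz

theorem nonneg (hc : 0 ≤ c) (hR : 0 < R) (hh : ∀ s, 0 ≤ h s) (hk : Continuous k)
    (hk_pos : ∀ s, 0 < s → 0 < k s) (z : ℝ) :
    0 ≤ gluedLyapunov c R h k z := by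
  rcases eq_or_ne z 0 with rfl | hz
  exacts [apply_zero.ge, (pos hc hR hh hk hk_pos hz).le]

theorem tendsto_atBot (hc : 0 ≤ c) (hh : ∀ s, 0 ≤ h s) :
    Tendsto (gluedLyapunov c R h k) atBot atTop :=
  tendsto_atTop_mono' _ ((eventually_le_atBot 0).mono fun _ hz => half_sq_le hc hh hz) <|
    by simpa [Function.comp_def] using
      ((tendsto_pow_atTop two_ne_zero).comp tendsto_neg_atBot_atTop).const_mul_atTop
        (by norm_num : (0 : ℝ) < 1 / 2)

theorem tendsto_atTop (hR : 0 < R) (hk : Continuous k) {m : ℝ} (hm : 0 < m)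
    (hkm : ∀ s, 1 ≤ s → m ≤ k s) :
    Tendsto (gluedLyapunov c R h k) atTop atTop := by
  have hright : Tendsto (fun z => R * ∫ s in 0..z, k s) atTop atTop :=
    ((tendsto_atTop_add_const_left _ (∫ s in 0..1, k s)
      (tendsto_integral_atTop_of_le hk hm hkm)).const_mul_atTop hR).congr fun z => by
      rw [intervalIntegral.integral_add_adjacent_intervals (hk.intervalIntegrable 0 1)
        (hk.intervalIntegrable 1 z)]
  exact hright.congr' <| (eventually_gt_atTop 0).mono fun z hz => by
    simp [gluedLyapunov, not_le.2 hz]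

theorem tendsto_cocompact (hc : 0 ≤ c) (hh : ∀ s, 0 ≤ h s) (hR : 0 < R) (hk : Continuous k)
    {m : ℝ} (hm : 0 < m) (hkm : ∀ s, 1 ≤ s → m ≤ k s) :
    Tendsto (gluedLyapunov c R h k) (cocompact ℝ) atTop := by
  rw [cocompact_eq_atBot_atTop]
  exact tendsto_sup.2 ⟨tendsto_atBot hc hh, tendsto_atTop hR hk hm hkm⟩

end gluedLyapunov

section Integrands

variable {p g : ℝ → ℝ}

noncomputable def negBranchIntegrand (α : ℝ) (p g : ℝ → ℝ) (s : ℝ) : ℝ :=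
  |g s - 1| ^ (1 - α) / (p s * g s)

noncomputable def posBranchIntegrand (g : ℝ → ℝ) (s : ℝ) : ℝ :=
  exp s / g s ^ 2 * (exp s - 1)

theorem continuous_negBranchIntegrand {α : ℝ} (hα : α < 1) (hp : Continuous p)
    (hg : Continuous g) (hpg : ∀ s, 0 < p s * g s) :
    Continuous (negBranchIntegrand α p g) :=
  (((hg.sub continuous_const).abs).rpow_const fun _ => Or.inr (by linarith)).div
    (hp.mul hg) fun s => (hpg s).ne'

theorem negBranchIntegrand_nonneg (α : ℝ) (hpg : ∀ s, 0 < p s * g s) (s : ℝ) :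
    0 ≤ negBranchIntegrand α p g s :=
  div_nonneg (rpow_nonneg (abs_nonneg _) _) (hpg s).le

theorem negBranchIntegrand_eq_zero {α s : ℝ} (hα : α < 1) (hs : g s = 1) :
    negBranchIntegrand α p g s = 0 := by
  simp [negBranchIntegrand, hs, zero_rpow (by linarith : 1 - α ≠ 0)]

theorem continuous_posBranchIntegrand (hg : Continuous g) (hg₀ : ∀ s, g s ≠ 0) :
    Continuous (posBranchIntegrand g) :=
  (continuous_exp.div (hg.pow 2) fun s => pow_ne_zero 2 (hg₀ s)).mul
    (continuous_exp.sub continuous_const)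

theorem posBranchIntegrand_zero : posBranchIntegrand g 0 = 0 := by
  simp [posBranchIntegrand]

theorem posBranchIntegrand_pos {s : ℝ} (hg : g s ≠ 0) (hs : 0 < s) :
    0 < posBranchIntegrand g s :=
  mul_pos (div_pos (exp_pos s) (by positivity)) (sub_pos.2 (one_lt_exp_iff.2 hs))

theorem inv_sq_le_posBranchIntegrand {s M : ℝ} (hg : 0 < g s) (hgM : g s ≤ M) (hs : 1 ≤ s) :
    (M ^ 2)⁻¹ ≤ posBranchIntegrand g s := by
  have hexp : 2 ≤ exp s := by linarith [add_one_le_exp s]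
  calc (M ^ 2)⁻¹ ≤ (g s ^ 2)⁻¹ := by gcongr
    _ ≤ exp s * (exp s - 1) / g s ^ 2 := by
      rw [inv_eq_one_div]; gcongr; nlinarith
    _ = posBranchIntegrand g s := by rw [posBranchIntegrand, div_mul_eq_mul_div]

end Integrands

section GrowthRatio

variable {μ p : ℝ → ℝ} {S_in Sstar : ℝ}

noncomputable def growthRatio (μ : ℝ → ℝ) (S_in Sstar : ℝ) (p : ℝ → ℝ) (z : ℝ) : ℝ :=
  μ (S_in / p z) / μ Sstar

theorem growthRatio_pos (hSin : 0 < S_in) (hS : 0 < Sstar) (hμ_pos : ∀ S, 0 < S → 0 < μ S)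
    (hp : ∀ z, 0 < p z) (z : ℝ) :
    0 < growthRatio μ S_in Sstar p z :=
  div_pos (hμ_pos _ (div_pos hSin (hp z))) (hμ_pos _ hS)

theorem continuous_growthRatio (hSin : 0 ≤ S_in) (hμ : ContinuousOn μ (Ici 0))
    (hp : Continuous p) (hp_pos : ∀ z, 0 < p z) :
    Continuous (growthRatio μ S_in Sstar p) :=
  (hμ.comp_continuous (continuous_const.div hp fun z => (hp_pos z).ne')
    fun z => div_nonneg hSin (hp_pos z).le).div_const _

theorem growthRatio_eq_one {z : ℝ} (hz : S_in / p z = Sstar) (hμS : μ Sstar ≠ 0) :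
    growthRatio μ S_in Sstar p z = 1 := by
  rw [growthRatio, hz, div_self hμS]

theorem growthRatio_le {C : ℝ} (hC : ∀ S, μ S ≤ C) (hμS : 0 < μ Sstar) (z : ℝ) :
    growthRatio μ S_in Sstar p z ≤ C / μ Sstar :=
  div_le_div_of_nonneg_right (hC _) hμS.le

end GrowthRatio

theorem exp_sub_self_sub_one_nonneg (t : ℝ) : 0 ≤ exp t - t - 1 := by
  linarith [add_one_le_exp t]

theorem exp_sub_self_sub_one_pos {t : ℝ} (ht : t ≠ 0) : 0 < exp t - t - 1 := by
  linarith [add_one_lt_exp ht]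

theorem tendsto_exp_sub_self_sub_one_cocompact :
    Tendsto (fun t => exp t - t - 1) (cocompact ℝ) atTop := by
  have hbound : ∀ t : ℝ, |t| - 2 ≤ exp t - t - 1 := by
    intro t
    rcases le_total 0 t with ht | ht
    · nlinarith [quadratic_le_exp_of_nonneg ht, abs_of_nonneg ht]
    · nlinarith [exp_pos t, abs_of_nonpos ht]
  exact tendsto_atTop_mono hbound <|
    tendsto_atTop_add_const_right _ (-2) tendsto_norm_cocompact_atTop

theorem prod_add_pos {X Y : Type*} [Zero X] [Zero Y] {f : X → ℝ} {g : Y → ℝ}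
    (hf₀ : ∀ x, 0 ≤ f x) (hg₀ : ∀ y, 0 ≤ g y) (hf : ∀ x ≠ 0, 0 < f x) (hg : ∀ y ≠ 0, 0 < g y)
    {x : X × Y} (hx : x ≠ 0) :
    0 < f x.1 + g x.2 := by
  rcases eq_or_ne x.1 0 with h₁ | h₁
  · exact add_pos_of_nonneg_of_pos (hf₀ _) (hg _ fun h₂ => hx (Prod.ext h₁ h₂))
  · exact add_pos_of_pos_of_nonneg (hf _ h₁) (hg₀ _)

theorem tendsto_cocompact_prod_add {X Y : Type*} [TopologicalSpace X] [TopologicalSpace Y]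
    {f : X → ℝ} {g : Y → ℝ} (hf₀ : ∀ x, 0 ≤ f x) (hg₀ : ∀ y, 0 ≤ g y)
    (hf : Tendsto f (cocompact X) atTop) (hg : Tendsto g (cocompact Y) atTop) :
    Tendsto (fun x : X × Y => f x.1 + g x.2) (cocompact (X × Y)) atTop := by
  rw [← coprod_cocompact, Filter.coprod, tendsto_sup]
  exact ⟨tendsto_atTop_mono (fun x => le_add_of_nonneg_right (hg₀ x.2)) (hf.comp tendsto_comap),
    tendsto_atTop_mono (fun x => le_add_of_nonneg_left (hf₀ x.1)) (hg.comp tendsto_comap)⟩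

open intervalIntegral in
theorem stmt_3_general
    (S_in Sstar b Dstar : ℝ) (μ : ℝ → ℝ)
    (hSin : 0 < S_in) (hSstar : Sstar ∈ Set.Ioo 0 S_in)
    (hb : 0 ≤ b) (hDstar : 0 < Dstar)
    (hμ_bdd : BddAbove (Set.range μ))
    (hμ_C1 : ContDiffOn ℝ 1 μ (Set.Ici 0))
    (hμ_pos : ∀ S, 0 < S → 0 < μ S)
    (κ : ℝ) (hκ : κ = (S_in - Sstar) / Sstar)
    (p g : ℝ → ℝ)
    (hp : ∀ z, p z = κ * Real.exp (-z) + 1)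
    (hg : ∀ z, g z = μ (S_in / p z) / μ Sstar)
    (δ α R : ℝ) (hδ : 0 < δ) (hα : α ∈ Set.Ico (0 : ℝ) 1) (hR : 0 < R)
    (Q : ℝ → ℝ)
    (hQ : ∀ z, Q z = if z ≤ 0 then
        (1/2) * z^2 + (b / (2 * Dstar * δ)) *
          ∫ s in z..(0:ℝ), |g s - 1| ^ (1 - α) / (p s * g s)
      else
        R * ∫ s in (0:ℝ)..z, (Real.exp s / (g s)^2) * (Real.exp s - 1))
    (V : ℝ × ℝ → ℝ)
    (hV : ∀ x : ℝ × ℝ, V x = Real.exp x.1 - x.1 - 1 + Q x.2) :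
    -- Q is differentiable on ℝ with Q'(0) = 0
    (∀ z : ℝ, DifferentiableAt ℝ Q z) ∧ deriv Q 0 = 0 ∧
    -- Q is positive definite
    Q 0 = 0 ∧ (∀ z : ℝ, z ≠ 0 → 0 < Q z) ∧
    -- Q is radially unbounded
    Filter.Tendsto Q Filter.atTop Filter.atTop ∧
    Filter.Tendsto Q Filter.atBot Filter.atTop ∧
    -- V is positive definite and radially unbounded
    V 0 = 0 ∧ (∀ x : ℝ × ℝ, x ≠ 0 → 0 < V x) ∧
    Filter.Tendsto V (Filter.cocompact (ℝ × ℝ)) Filter.atTop := by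
  obtain ⟨hS₀, hS_lt⟩ := hSstar
  have hp_pos : ∀ z, 0 < p z := fun z => by
    rw [hp, hκ]; have := div_pos (sub_pos.2 hS_lt) hS₀; positivity
  have hp_cont : Continuous p := funext hp ▸ by fun_prop
  have hp_zero : S_in / p 0 = Sstar := by
    rw [hp, hκ, neg_zero, exp_zero, mul_one, div_add_one hS₀.ne', sub_add_cancel,
      div_div_cancel₀ hSin.ne']
  obtain rfl : g = growthRatio μ S_in Sstar p := funext hg
  have hg_pos := growthRatio_pos hSin hS₀ hμ_pos hp_pos
  have hg_cont := continuous_growthRatio (Sstar := Sstar) hSin.le hμ_C1.continuousOn hp_cont hp_pos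
  obtain ⟨C, hC⟩ := hμ_bdd
  have hg_le := growthRatio_le (S_in := S_in) (p := p) (fun S => hC ⟨S, rfl⟩) (hμ_pos _ hS₀)
  have hpg s : 0 < p s * growthRatio μ S_in Sstar p s := mul_pos (hp_pos s) (hg_pos s)
  have hh := continuous_negBranchIntegrand hα.2 hp_cont hg_cont hpg
  have hh₀ := negBranchIntegrand_eq_zero (p := p) hα.2
    (growthRatio_eq_one hp_zero (hμ_pos _ hS₀).ne')
  have hh_nonneg := negBranchIntegrand_nonneg α hpg
  have hk := continuous_posBranchIntegrand hg_cont fun s => (hg_pos s).ne'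
  have hk_pos s (hs : 0 < s) := posBranchIntegrand_pos (hg_pos s).ne' hs
  have hk_ge s := inv_sq_le_posBranchIntegrand (hg_pos s) (hg_le s)
  have hm := inv_pos.2 (pow_pos ((hg_pos 0).trans_le (hg_le 0)) 2)
  have hc : 0 ≤ b / (2 * Dstar * δ) := by positivity
  obtain rfl : V = fun x => (exp x.1 - x.1 - 1) + Q x.2 := funext hV
  obtain rfl : Q = gluedLyapunov (b / (2 * Dstar * δ)) R (negBranchIntegrand α p _)
    (posBranchIntegrand _) := funext hQ
  have hQ_nonneg := gluedLyapunov.nonneg hc hR hh_nonneg hk hk_pos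
  have hQ_pos z := gluedLyapunov.pos (z := z) hc hR hh_nonneg hk hk_pos
  exact ⟨gluedLyapunov.differentiable hh hk hh₀ posBranchIntegrand_zero,
    (gluedLyapunov.hasDerivAt_zero hh hk hh₀ posBranchIntegrand_zero).deriv,
    gluedLyapunov.apply_zero, hQ_pos, gluedLyapunov.tendsto_atTop hR hk hm hk_ge,
    gluedLyapunov.tendsto_atBot hc hh_nonneg, by simp [gluedLyapunov.apply_zero],
    fun x => prod_add_pos exp_sub_self_sub_one_nonneg hQ_nonneg
      (fun _ => exp_sub_self_sub_one_pos) hQ_pos,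
    tendsto_cocompact_prod_add exp_sub_self_sub_one_nonneg hQ_nonneg
      tendsto_exp_sub_self_sub_one_cocompact
      (gluedLyapunov.tendsto_cocompact hc hh_nonneg hR hk hm hk_ge)⟩

open intervalIntegral in
/-- Properties of the Lyapunov function building blocks Q and V. -/
theorem stmt_3
    (S_in Sstar p0 b Dstar : ℝ) (μ : ℝ → ℝ)
    (hSin : 0 < S_in) (hSstar : Sstar ∈ Set.Ioo 0 S_in)
    (hp0 : 0 < p0) (hb : 0 ≤ b) (hDstar : 0 < Dstar)
    (hμ_bdd : BddAbove (Set.range μ))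
    (hμ_C1 : ContDiffOn ℝ 1 μ (Set.Ici 0))
    (hμ_nonneg : ∀ S, 0 ≤ S → 0 ≤ μ S)
    (hμ_zero : μ 0 = 0) (hμ_pos : ∀ S, 0 < S → 0 < μ S)
    (heq : p0 * μ Sstar = b + Dstar)
    (κ : ℝ) (hκ : κ = (S_in - Sstar) / Sstar)
    (p g : ℝ → ℝ)
    (hp : ∀ z, p z = κ * Real.exp (-z) + 1)
    (hg : ∀ z, g z = μ (S_in / p z) / μ Sstar)
    (δ α R : ℝ) (hδ : 0 < δ) (hα : α ∈ Set.Ico (0 : ℝ) 1) (hR : 0 < R)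
    (Q : ℝ → ℝ)
    (hQ : ∀ z, Q z = if z ≤ 0 then
        (1/2) * z^2 + (b / (2 * Dstar * δ)) *
          ∫ s in z..(0:ℝ), |g s - 1| ^ (1 - α) / (p s * g s)
      else
        R * ∫ s in (0:ℝ)..z, (Real.exp s / (g s)^2) * (Real.exp s - 1))
    (V : ℝ × ℝ → ℝ)
    (hV : ∀ x : ℝ × ℝ, V x = Real.exp x.1 - x.1 - 1 + Q x.2) :
    -- Q is differentiable on ℝ with Q'(0) = 0
    (∀ z : ℝ, DifferentiableAt ℝ Q z) ∧ deriv Q 0 = 0 ∧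
    -- Q is positive definite
    Q 0 = 0 ∧ (∀ z : ℝ, z ≠ 0 → 0 < Q z) ∧
    -- Q is radially unbounded
    Filter.Tendsto Q Filter.atTop Filter.atTop ∧
    Filter.Tendsto Q Filter.atBot Filter.atTop ∧
    -- V is positive definite and radially unbounded
    V 0 = 0 ∧ (∀ x : ℝ × ℝ, x ≠ 0 → 0 < V x) ∧
    Filter.Tendsto V (Filter.cocompact (ℝ × ℝ)) Filter.atTop :=
  stmt_3_general S_in Sstar b Dstar μ hSin hSstar hb hDstar hμ_bdd hμ_C1 hμ_pos κ hκ p g hp hg δ α R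
    hδ hα hR Q hQ V hV
end

section
/- Suppose g is differentiable at 0 with g'(0) < 0 (which holds in particular when μ'(S*) < 0). Then the linearization matrix of the open-loop transformed chemostat system at the origin with constant input D = D*, namely the 2×2 real matrix A = [[−D*·g(0), b·g'(0)], [−D*·p(0), −D*·p(0)·g'(0)]] with g(0) = 1 and p(0) = κ+1, has a real eigenvalue s > 0, i.e., there exists s > 0 with det(s·I − A) = 0; equivalently, the characteristic polynomial f(s) = s² + D*(g(0) + p(0)g'(0))s + D*·p(0)·g'(0)(b + D*·g(0)) has a positive real root. -/
/-- If g'(0) < 0 then the linearization matrix of the open-loop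
transformed chemostat at the origin has a positive real eigenvalue; equivalently
the characteristic polynomial has a positive real root. -/
theorem stmt_5
    (S_in Sstar p0 b Dstar : ℝ) (μ : ℝ → ℝ)
    (hSin : 0 < S_in) (hSstar : Sstar ∈ Set.Ioo 0 S_in)
    (hp0 : 0 < p0) (hb : 0 ≤ b) (hDstar : 0 < Dstar)
    (hμ_bdd : BddAbove (Set.range μ))
    (hμ_C1 : ContDiffOn ℝ 1 μ (Set.Ici 0))
    (hμ_nonneg : ∀ S, 0 ≤ S → 0 ≤ μ S)
    (hμ_zero : μ 0 = 0) (hμ_pos : ∀ S, 0 < S → 0 < μ S)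
    (heq : p0 * μ Sstar = b + Dstar)
    (κ : ℝ) (hκ : κ = (S_in - Sstar) / Sstar)
    (p g : ℝ → ℝ)
    (hp : ∀ z, p z = κ * Real.exp (-z) + 1)
    (hg : ∀ z, g z = μ (S_in / p z) / μ Sstar)
    (hgdiff : DifferentiableAt ℝ g 0)
    (hg'neg : deriv g 0 < 0)
    (hg0 : g 0 = 1) (hp0' : p 0 = κ + 1)
    (A : Matrix (Fin 2) (Fin 2) ℝ)
    (hA : A = !![-Dstar * g 0, b * deriv g 0;
                 -Dstar * p 0, -Dstar * p 0 * deriv g 0]) :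
    ∃ s : ℝ, 0 < s ∧
      Matrix.det (s • (1 : Matrix (Fin 2) (Fin 2) ℝ) - A) = 0 ∧
      s^2 + Dstar * (g 0 + p 0 * deriv g 0) * s +
        Dstar * p 0 * deriv g 0 * (b + Dstar * g 0) = 0 := by

  have hκpos : 0 < κ := by
    rw [hκ]
    exact div_pos (by linarith [hSstar.2]) hSstar.1
  set G := deriv g 0 with hG
  set B := Dstar * (g 0 + p 0 * G) with hB
  set C := Dstar * p 0 * G * (b + Dstar * g 0) with hC
  have hppos : 0 < p 0 := by rw [hp0']; linarith
  have hCneg : C < 0 := by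
    have h1 : 0 < Dstar * p 0 := mul_pos hDstar hppos
    have h2 : 0 < b + Dstar * g 0 := by rw [hg0]; linarith
    have : C = Dstar * p 0 * (b + Dstar * g 0) * G := by rw [hC]; ring
    rw [this]
    exact mul_neg_of_pos_of_neg (by positivity) hg'neg
  have hdisc : 0 < B ^ 2 - 4 * C := by nlinarith [sq_nonneg B]
  set r := Real.sqrt (B ^ 2 - 4 * C) with hr
  have hrnn : 0 ≤ r := Real.sqrt_nonneg _
  have hsq : r ^ 2 = B ^ 2 - 4 * C := Real.sq_sqrt hdisc.le
  have hrB : B < r := by nlinarith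
  refine ⟨(-B + r) / 2, by linarith, ?_, ?_⟩
  · rw [hA]
    have hdet : ((-B + r) / 2) • (1 : Matrix (Fin 2) (Fin 2) ℝ) -
        !![-Dstar * g 0, b * G; -Dstar * p 0, -Dstar * p 0 * G] =
        !![(-B + r) / 2 + Dstar * g 0, -(b * G);
           Dstar * p 0, (-B + r) / 2 + Dstar * p 0 * G] := by
      ext i j
      fin_cases i <;> fin_cases j <;>
        simp [Matrix.one_apply] <;> ring
    rw [hdet, Matrix.det_fin_two_of]
    rw [hB] at hsq ⊢
    rw [hC] at hsq
    nlinarith [hsq]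
  · linear_combination hsq / 4
end

section
/- If L ≥ 0 is a constant such that |μ(S) − μ(S*)| ≤ L·|S − S*| for all S ∈ [0,S_in], then |g(z) − 1| ≤ A·|e^z − 1| for all z ∈ ℝ, where A := L·p0·S*/(b + D*). -/
open Real Set

/- Writing `S* (κ + 1) / (κ t + 1) - S* = S* · κt/(κt + 1) · (1/t - 1)` with `t = e^{-z}`, the
factor `κt/(κt + 1)` lies in `[0, 1)`, so `|S_in/p(z) - S*| ≤ S*·|e^z - 1|`. The Lipschitz bound
at `S*` and `μ(S*) = (b + D*)/p0` then turn this into the bound on `g(z) - 1 = (μ(S_in/p(z)) - μ(S*))/μ(S*)`. -/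

lemma abs_add_one_div_mul_add_one_sub_one_le {κ t : ℝ} (hκ : 0 ≤ κ) (ht : 0 < t) :
    |(κ + 1) / (κ * t + 1) - 1| ≤ |t⁻¹ - 1| := by
  have hden : 0 < κ * t + 1 := by positivity
  have hfactor : (κ + 1) / (κ * t + 1) - 1 = κ * t / (κ * t + 1) * (t⁻¹ - 1) := by
    field_simp
    ring
  have hle : κ * t / (κ * t + 1) ≤ 1 := (div_le_one hden).2 (by linarith)
  rw [hfactor, abs_mul, abs_of_nonneg (by positivity)]
  exact mul_le_of_le_one_left (abs_nonneg _) hle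

theorem stmt_6_general
    (S_in Sstar p0 b Dstar : ℝ) (μ : ℝ → ℝ)
    (hSstar : Sstar ∈ Set.Ioo 0 S_in)
    (hp0 : 0 < p0)
    (hμ_pos : ∀ S, 0 < S → 0 < μ S)
    (heq : p0 * μ Sstar = b + Dstar)
    (κ : ℝ) (hκ : κ = (S_in - Sstar) / Sstar)
    (p g : ℝ → ℝ)
    (hp : ∀ z, p z = κ * Real.exp (-z) + 1)
    (hg : ∀ z, g z = μ (S_in / p z) / μ Sstar)
    (L : ℝ) (hL : 0 ≤ L)
    (hLip : ∀ S ∈ Set.Icc (0 : ℝ) S_in, |μ S - μ Sstar| ≤ L * |S - Sstar|)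
    (A : ℝ) (hA : A = L * p0 * Sstar / (b + Dstar)) :
    ∀ z : ℝ, |g z - 1| ≤ A * |Real.exp z - 1| := by
  intro z
  obtain ⟨hSstar_pos, hSstar_lt⟩ := hSstar
  have hκ_nonneg : 0 ≤ κ := hκ ▸ div_nonneg (by linarith) hSstar_pos.le
  have hμSstar : 0 < μ Sstar := hμ_pos _ hSstar_pos
  have hratio_le : (κ + 1) / (κ * exp (-z) + 1) ≤ κ + 1 :=
    div_le_self (by linarith) (by linarith [mul_nonneg hκ_nonneg (exp_pos (-z)).le])
  have hS : S_in / p z = Sstar * ((κ + 1) / (κ * exp (-z) + 1)) := by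
    rw [hp, hκ]
    field_simp
    ring
  have hS_mem : S_in / p z ∈ Icc 0 S_in := by
    refine ⟨by rw [hS]; positivity, ?_⟩
    calc S_in / p z ≤ Sstar * (κ + 1) := by rw [hS]; gcongr
      _ = S_in := by rw [hκ]; field_simp; ring
  have hdist : |S_in / p z - Sstar| ≤ Sstar * |exp z - 1| := by
    rw [hS, ← mul_sub_one, abs_mul, abs_of_pos hSstar_pos]
    refine mul_le_mul_of_nonneg_left ?_ hSstar_pos.le
    simpa only [exp_neg, inv_inv] using
      abs_add_one_div_mul_add_one_sub_one_le hκ_nonneg (exp_pos (-z))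
  have hA' : A = L * Sstar / μ Sstar := by
    rw [hA, ← heq]
    field_simp
  rw [hg, hA', div_sub_one hμSstar.ne', abs_div, abs_of_pos hμSstar, div_mul_eq_mul_div]
  gcongr
  calc |μ (S_in / p z) - μ Sstar| ≤ L * |S_in / p z - Sstar| := hLip _ hS_mem
    _ ≤ L * (Sstar * |exp z - 1|) := by gcongr
    _ = L * Sstar * |exp z - 1| := by ring

/-- If |μ(S) − μ(S*)| ≤ L·|S − S*| on [0,S_in], then
|g(z) − 1| ≤ A·|e^z − 1| for all z ∈ ℝ, where A := L·p0·S*/(b + D*). -/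
theorem stmt_6
    (S_in Sstar p0 b Dstar : ℝ) (μ : ℝ → ℝ)
    (hSin : 0 < S_in) (hSstar : Sstar ∈ Set.Ioo 0 S_in)
    (hp0 : 0 < p0) (hb : 0 ≤ b) (hDstar : 0 < Dstar)
    (hμ_bdd : BddAbove (Set.range μ))
    (hμ_C1 : ContDiffOn ℝ 1 μ (Set.Ici 0))
    (hμ_nonneg : ∀ S, 0 ≤ S → 0 ≤ μ S)
    (hμ_zero : μ 0 = 0) (hμ_pos : ∀ S, 0 < S → 0 < μ S)
    (heq : p0 * μ Sstar = b + Dstar)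
    (κ : ℝ) (hκ : κ = (S_in - Sstar) / Sstar)
    (p g : ℝ → ℝ)
    (hp : ∀ z, p z = κ * Real.exp (-z) + 1)
    (hg : ∀ z, g z = μ (S_in / p z) / μ Sstar)
    (L : ℝ) (hL : 0 ≤ L)
    (hLip : ∀ S ∈ Set.Icc (0 : ℝ) S_in, |μ S - μ Sstar| ≤ L * |S - Sstar|)
    (A : ℝ) (hA : A = L * p0 * Sstar / (b + Dstar)) :
    ∀ z : ℝ, |g z - 1| ≤ A * |Real.exp z - 1| :=
  stmt_6_general S_in Sstar p0 b Dstar μ hSstar hp0 hμ_pos heq κ hκ p g hp hg L hL hLip A hA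
end

section
/- Suppose Assumption (A) holds. Then there exists a constant r ∈ [0,1) such that b·(g(z) − 1)/g(z) ≥ −r·D* for all z ≥ 0; equivalently, b·(1 − μ(S*)/μ(S)) ≥ −r·D* for all S ∈ [S*, S_in]. -/
/-!
At `S ∈ [S*, S_in]`, using `p0 μ(S*) = b + D*`, the inequality `b (1 - μ(S*)/μ(S)) > -D*` is
equivalent to Assumption (A) at `S`. The left side is continuous on the compact interval, so its
minimum exceeds `-D*` by a margin, which yields `r < 1`. For `z ≥ 0` the substrate level
`S_in / p(z)` lies in `[S*, S_in]`, and there `b (g - 1)/g = b (1 - μ(S*)/μ(S))`.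
-/

open Set

theorem IsCompact.exists_lt_one_forall_neg_mul_le {α : Type*} [TopologicalSpace α] {K : Set α}
    (hK : IsCompact K) {f : α → ℝ} (hf : ContinuousOn f K) {D : ℝ} (hD : 0 < D)
    (h : ∀ x ∈ K, -D < f x) : ∃ r ∈ Ico (0 : ℝ) 1, ∀ x ∈ K, -(r * D) ≤ f x := by
  obtain ⟨m, hDm, hm⟩ := hK.exists_forall_le' hf h
  refine ⟨max 0 (-m / D), ⟨le_max_left _ _, max_lt one_pos ?_⟩, fun x hx => ?_⟩
  · rw [div_lt_one hD]
    linarith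
  · have hmD : -m ≤ max 0 (-m / D) * D := by
      rw [← div_le_iff₀ hD]
      exact le_max_right _ _
    linarith [hm x hx]

theorem neg_lt_mul_one_sub_div {b D p₀ m₀ m : ℝ} (hm₀ : 0 < m₀) (hm : 0 < m)
    (heq : p₀ * m₀ = b + D) (hA : b < p₀ * m) : -D < b * (1 - m₀ / m) := by
  have key : b * m₀ < (b + D) * m := by
    rw [← heq]
    nlinarith
  rw [mul_one_sub, mul_div_assoc', neg_lt_sub_iff_lt_add, div_lt_iff₀ hm]
  linarith

theorem div_mul_add_one_mem_Icc {S₀ S₁ t : ℝ} (hS₀ : 0 < S₀) (hS₀₁ : S₀ ≤ S₁)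
    (ht₀ : 0 ≤ t) (ht₁ : t ≤ 1) : S₁ / ((S₁ - S₀) / S₀ * t + 1) ∈ Icc S₀ S₁ := by
  have hκ : 0 ≤ (S₁ - S₀) / S₀ := div_nonneg (by linarith) hS₀.le
  have hd : 1 ≤ (S₁ - S₀) / S₀ * t + 1 := by nlinarith
  constructor
  · rw [le_div_iff₀ (by linarith), mul_add, ← mul_assoc, mul_div_cancel₀ _ hS₀.ne']
    nlinarith
  · exact div_le_self (by linarith) hd

theorem stmt_7_general
    (S_in Sstar p0 b Dstar : ℝ) (μ : ℝ → ℝ)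
    (hSstar : Sstar ∈ Set.Ioo 0 S_in)
    (hDstar : 0 < Dstar)
    (hμ_C1 : ContDiffOn ℝ 1 μ (Set.Ici 0))
    (hμ_pos : ∀ S, 0 < S → 0 < μ S)
    (heq : p0 * μ Sstar = b + Dstar)
    (κ : ℝ) (hκ : κ = (S_in - Sstar) / Sstar)
    (p g : ℝ → ℝ)
    (hp : ∀ z, p z = κ * Real.exp (-z) + 1)
    (hg : ∀ z, g z = μ (S_in / p z) / μ Sstar)
    -- Assumption (A)
    (hA : ∀ S ∈ Set.Icc Sstar S_in, b < p0 * μ S) :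
    ∃ r ∈ Set.Ico (0 : ℝ) 1,
      (∀ z : ℝ, 0 ≤ z → -(r * Dstar) ≤ b * (g z - 1) / g z) ∧
      (∀ S ∈ Set.Icc Sstar S_in, -(r * Dstar) ≤ b * (1 - μ Sstar / μ S)) := by
  obtain ⟨hS0, hSS⟩ := hSstar
  have hμ_Icc : ∀ S ∈ Icc Sstar S_in, 0 < μ S := fun S hS => hμ_pos S (hS0.trans_le hS.1)
  have hcont : ContinuousOn (fun S => b * (1 - μ Sstar / μ S)) (Icc Sstar S_in) :=
    have hμ : ContinuousOn μ (Icc Sstar S_in) :=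
      hμ_C1.continuousOn.mono fun S hS => hS0.le.trans hS.1
    continuousOn_const.mul (continuousOn_const.sub
      (continuousOn_const.div hμ fun S hS => (hμ_Icc S hS).ne'))
  obtain ⟨r, hr, hbound⟩ := isCompact_Icc.exists_lt_one_forall_neg_mul_le hcont hDstar
    fun S hS => neg_lt_mul_one_sub_div (hμ_pos Sstar hS0) (hμ_Icc S hS) heq (hA S hS)
  refine ⟨r, hr, fun z hz => ?_, hbound⟩
  have hmem : S_in / p z ∈ Icc Sstar S_in := by
    rw [hp, hκ]
    exact div_mul_add_one_mem_Icc hS0 hSS.le (Real.exp_pos _).le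
      (Real.exp_le_one_iff.mpr (neg_nonpos.mpr hz))
  have hg_eq : b * (g z - 1) / g z = b * (1 - μ Sstar / μ (S_in / p z)) := by
    have hμ_star := hμ_pos Sstar hS0
    have hμ_mem := hμ_Icc _ hmem
    rw [hg z]
    field_simp
  rw [hg_eq]
  exact hbound _ hmem

/-- Under Assumption (A) there exists r ∈ [0,1) such that
b·(g(z)−1)/g(z) ≥ −r·D* for all z ≥ 0; equivalently
b·(1 − μ(S*)/μ(S)) ≥ −r·D* for all S ∈ [S*,S_in]. -/
theorem stmt_7
    (S_in Sstar p0 b Dstar : ℝ) (μ : ℝ → ℝ)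
    (hSin : 0 < S_in) (hSstar : Sstar ∈ Set.Ioo 0 S_in)
    (hp0 : 0 < p0) (hb : 0 ≤ b) (hDstar : 0 < Dstar)
    (hμ_bdd : BddAbove (Set.range μ))
    (hμ_C1 : ContDiffOn ℝ 1 μ (Set.Ici 0))
    (hμ_nonneg : ∀ S, 0 ≤ S → 0 ≤ μ S)
    (hμ_zero : μ 0 = 0) (hμ_pos : ∀ S, 0 < S → 0 < μ S)
    (heq : p0 * μ Sstar = b + Dstar)
    (κ : ℝ) (hκ : κ = (S_in - Sstar) / Sstar)
    (p g : ℝ → ℝ)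
    (hp : ∀ z, p z = κ * Real.exp (-z) + 1)
    (hg : ∀ z, g z = μ (S_in / p z) / μ Sstar)
    -- Assumption (A)
    (hA : ∀ S ∈ Set.Icc Sstar S_in, b < p0 * μ S) :
    ∃ r ∈ Set.Ico (0 : ℝ) 1,
      (∀ z : ℝ, 0 ≤ z → -(r * Dstar) ≤ b * (g z - 1) / g z) ∧
      (∀ S ∈ Set.Icc Sstar S_in, -(r * Dstar) ≤ b * (1 - μ Sstar / μ S)) :=
  stmt_7_general S_in Sstar p0 b Dstar μ hSstar hDstar hμ_C1 hμ_pos heq κ hκ p g hp hg hA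
end

section
/- Suppose there exists S̄ ∈ (S*, S_in) such that p0·μ(S_in) < p0·μ(S̄) < b and μ'(S) ≤ 0 for all S ∈ [S̄, S_in], and set θ := b − p0·μ(S̄) > 0. Then for every locally Lipschitz function D : ℝ² → ℝ with D(x) ≥ 0 for all x ∈ ℝ², there exists an initial condition x0 ∈ ℝ² such that every continuously differentiable solution x = (x1,x2) : [0,∞) → ℝ² of the closed-loop system x1'(t) = b(g(x2(t))−1) + D*·g(x2(t))(1−e^{x1(t)}), x2'(t) = p(x2(t))(D(x(t)) − D*·g(x2(t))·e^{x1(t)}) with x(0) = x0 satisfies x1(t) ≤ x1(0) − θ·t for all t ≥ 0; in particular x1(t) → −∞ as t → ∞ and the solution is unbounded, so no such feedback achieves global asymptotic stabilization of the origin. -/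
/-!
Where the state component `z = x₂` is large, the substrate level `S_in / p z` lies in `[S̄, S_in]`,
where `μ` is nonincreasing, so `x₁' ≤ p₀ μ(S̄) - b = -θ` no matter what the feedback does, while
`x₂' ≥ -C e^{x₁}` because `D ≥ 0`. The function `V = x₂ - K e^{x₁}` with `K θ > C` then strictly
increases whenever it reaches a level `z₀` above which these bounds hold, so an initial condition
with `V ≥ z₀` keeps `x₂ ≥ z₀` forever and `x₁` decays at least linearly with slope `θ`.
-/

open Real Set Filter

theorem le_of_hasDerivAt_pos_of_eq {f f' : ℝ → ℝ} {c : ℝ}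
    (hf : ∀ t, 0 ≤ t → HasDerivAt f (f' t) t) (h0 : c ≤ f 0)
    (hpos : ∀ t, 0 ≤ t → f t = c → 0 < f' t) {t : ℝ} (ht : 0 ≤ t) : c ≤ f t :=
  image_le_of_deriv_right_lt_deriv_boundary' continuousOn_const
    (fun _ _ => hasDerivWithinAt_const _ _ c) h0
    (fun s hs => (hf s hs.1).continuousAt.continuousWithinAt)
    (fun s hs => (hf s hs.1).hasDerivWithinAt) (fun s hs h => hpos s hs.1 h.symm) ⟨ht, le_rfl⟩

theorem le_sub_mul_of_hasDerivAt_le {f f' : ℝ → ℝ} {θ : ℝ}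
    (hf : ∀ t, 0 ≤ t → HasDerivAt f (f' t) t) (hf' : ∀ t, 0 ≤ t → f' t ≤ -θ)
    {t : ℝ} (ht : 0 ≤ t) : f t ≤ f 0 - θ * t := by
  have hline : ∀ s, HasDerivAt (fun s => f 0 - θ * s) (-θ) s := fun s => by
    simpa using ((hasDerivAt_id s).const_mul θ).const_sub (f 0)
  refine image_le_of_deriv_right_le_deriv_boundary
    (fun s hs => (hf s hs.1).continuousAt.continuousWithinAt)
    (fun s hs => (hf s hs.1).hasDerivWithinAt) (by simp)
    (fun s _ => (hline s).continuousAt.continuousWithinAt)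
    (fun s _ => (hline s).hasDerivWithinAt) (fun s hs => hf' s hs.1) ⟨ht, le_rfl⟩

theorem fst_le_sub_mul_of_lyapunov {F : ℝ × ℝ → ℝ × ℝ} {x : ℝ → ℝ × ℝ} {z₀ θ C K : ℝ}
    (hx : ∀ t, 0 ≤ t → HasDerivAt x (F (x t)) t)
    (hF₁ : ∀ u : ℝ × ℝ, z₀ ≤ u.2 → (F u).1 ≤ -θ)
    (hF₂ : ∀ u : ℝ × ℝ, z₀ ≤ u.2 → -(C * exp u.1) ≤ (F u).2)
    (hK : 0 ≤ K) (hKθ : C < K * θ) (h0 : z₀ ≤ (x 0).2 - K * exp (x 0).1)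
    {t : ℝ} (ht : 0 ≤ t) : (x t).1 ≤ (x 0).1 - θ * t := by
  have hx₁ : ∀ s, 0 ≤ s → HasDerivAt (fun s => (x s).1) (F (x s)).1 s := fun s hs => (hx s hs).fst
  have hx₂ : ∀ s, 0 ≤ s → HasDerivAt (fun s => (x s).2) (F (x s)).2 s := fun s hs => (hx s hs).snd
  have hV : ∀ s, 0 ≤ s → HasDerivAt (fun s => (x s).2 - K * exp (x s).1)
      ((F (x s)).2 - K * (exp (x s).1 * (F (x s)).1)) s := fun s hs =>
    (hx₂ s hs).sub (((hx₁ s hs).exp).const_mul K)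
  have snd_ge_of_V : ∀ s, z₀ ≤ (x s).2 - K * exp (x s).1 → z₀ ≤ (x s).2 := fun s h => by
    nlinarith [exp_pos (x s).1]
  have hV_ge : ∀ s, 0 ≤ s → z₀ ≤ (x s).2 - K * exp (x s).1 := fun s hs =>
    le_of_hasDerivAt_pos_of_eq hV h0 (fun r _ hr => by
      have h₁ := hF₁ (x r) (snd_ge_of_V r hr.ge)
      have h₂ := hF₂ (x r) (snd_ge_of_V r hr.ge)
      have h₁' := mul_le_mul_of_nonneg_left h₁ (mul_nonneg hK (exp_pos (x r).1).le)
      nlinarith [mul_pos (exp_pos (x r).1) (sub_pos.2 hKθ)]) hs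
  exact le_sub_mul_of_hasDerivAt_le hx₁
    (fun s hs => hF₁ _ (snd_ge_of_V s (hV_ge s hs))) ht

theorem exists_forall_ge_mul_exp_neg_add_one_mem_Icc {κ r : ℝ} (hκ : 0 ≤ κ) (hr : 1 < r) :
    ∃ z₀, ∀ z, z₀ ≤ z → κ * exp (-z) + 1 ∈ Icc 1 r := by
  have hlim : Tendsto (fun z => κ * exp (-z)) atTop (nhds 0) := by
    simpa using tendsto_exp_neg_atTop_nhds_zero.const_mul κ
  obtain ⟨z₀, hz₀⟩ := eventually_atTop.1 (hlim.eventually (ge_mem_nhds (sub_pos.2 hr)))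
  exact ⟨z₀, fun z hz => ⟨by simp [mul_nonneg hκ (exp_pos (-z)).le], by linarith [hz₀ z hz]⟩⟩

theorem exists_closedLoop_field_bounds {S_in Sstar p0 b Dstar κ Sbar θ : ℝ} {μ p g : ℝ → ℝ}
    (hSstar : 0 < Sstar) (hp0 : 0 ≤ p0) (hDstar : 0 ≤ Dstar) (hμ_pos : ∀ S, 0 < S → 0 < μ S)
    (heq : p0 * μ Sstar = b + Dstar) (hκ : 0 ≤ κ) (hp : ∀ z, p z = κ * exp (-z) + 1)
    (hg : ∀ z, g z = μ (S_in / p z) / μ Sstar) (hSbar : Sbar ∈ Ioo 0 S_in)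
    (hμ_anti : AntitoneOn μ (Icc Sbar S_in)) (hθ : θ = b - p0 * μ Sbar) :
    ∃ z₀ C, 0 ≤ C ∧ ∀ z, z₀ ≤ z → ∀ w,
      b * (g z - 1) + Dstar * g z * (1 - exp w) ≤ -θ ∧
      ∀ y, 0 ≤ y → -(C * exp w) ≤ p z * (y - Dstar * g z * exp w) := by
  obtain ⟨hSbar_pos, hSbar_lt⟩ := hSbar
  have hSin : 0 < S_in := hSbar_pos.trans hSbar_lt
  have hμSstar := hμ_pos Sstar hSstar
  have hμSbar := hμ_pos Sbar hSbar_pos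
  obtain ⟨z₀, hz₀⟩ := exists_forall_ge_mul_exp_neg_add_one_mem_Icc hκ
    ((one_lt_div hSbar_pos).2 hSbar_lt)
  refine ⟨z₀, S_in / Sbar * (Dstar * (μ Sbar / μ Sstar)), by positivity, fun z hz w => ?_⟩
  obtain ⟨hp_one, hp_le⟩ : p z ∈ Icc 1 (S_in / Sbar) := hp z ▸ hz₀ z hz
  have hS : S_in / p z ∈ Icc Sbar S_in :=
    ⟨(le_div_iff₀ (by linarith)).2 ((le_div_iff₀' hSbar_pos).1 hp_le), div_le_self hSin.le hp_one⟩
  have hμS : μ (S_in / p z) ≤ μ Sbar := hμ_anti ⟨le_rfl, hSbar_lt.le⟩ hS hS.1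
  have hg_nonneg : 0 ≤ g z := hg z ▸ div_nonneg (hμ_pos _ (hSbar_pos.trans_le hS.1)).le hμSstar.le
  have hg_le : g z ≤ μ Sbar / μ Sstar := hg z ▸ div_le_div_of_nonneg_right hμS hμSstar.le
  have hgμ : (b + Dstar) * g z = p0 * μ (S_in / p z) := by
    rw [hg, ← heq]; field_simp
  refine ⟨?_, fun y hy => ?_⟩
  · nlinarith [mul_le_mul_of_nonneg_left hμS hp0,
      mul_nonneg (mul_nonneg hDstar hg_nonneg) (exp_pos w).le]
  · have hpg : p z * (Dstar * g z) ≤ S_in / Sbar * (Dstar * (μ Sbar / μ Sstar)) :=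
      mul_le_mul hp_le (mul_le_mul_of_nonneg_left hg_le hDstar) (by positivity) (by positivity)
    nlinarith [mul_le_mul_of_nonneg_right hpg (exp_pos w).le,
      mul_nonneg (zero_le_one.trans hp_one) hy]

theorem stmt_8_general
    (S_in Sstar p0 b Dstar : ℝ) (μ : ℝ → ℝ)
    (hSstar : Sstar ∈ Set.Ioo 0 S_in)
    (hp0 : 0 < p0) (hDstar : 0 < Dstar)
    (hμ_C1 : ContDiffOn ℝ 1 μ (Set.Ici 0))
    (hμ_pos : ∀ S, 0 < S → 0 < μ S)
    (heq : p0 * μ Sstar = b + Dstar)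
    (κ : ℝ) (hκ : κ = (S_in - Sstar) / Sstar)
    (p g : ℝ → ℝ)
    (hp : ∀ z, p z = κ * Real.exp (-z) + 1)
    (hg : ∀ z, g z = μ (S_in / p z) / μ Sstar)
    (Sbar : ℝ) (hSbar : Sbar ∈ Set.Ioo Sstar S_in)
    (h2 : p0 * μ Sbar < b)
    (h3 : ∀ S ∈ Set.Icc Sbar S_in, deriv μ S ≤ 0)
    (θ : ℝ) (hθ : θ = b - p0 * μ Sbar) :
    ∀ D : ℝ × ℝ → ℝ, LocallyLipschitz D → (∀ x, 0 ≤ D x) →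
      ∃ x0 : ℝ × ℝ, ∀ x : ℝ → ℝ × ℝ,
        (∀ t, 0 ≤ t → HasDerivAt x
          ((b * (g (x t).2 - 1) + Dstar * g (x t).2 * (1 - Real.exp (x t).1),
            p (x t).2 * (D (x t) - Dstar * g (x t).2 * Real.exp (x t).1)) : ℝ × ℝ) t) →
        x 0 = x0 →
        (∀ t, 0 ≤ t → (x t).1 ≤ x0.1 - θ * t) ∧
        Filter.Tendsto (fun t => (x t).1) Filter.atTop Filter.atBot := by
  intro D _ hD_nonneg
  have hSbar_pos : 0 < Sbar := hSstar.1.trans hSbar.1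
  have hμ_anti : AntitoneOn μ (Icc Sbar S_in) := by
    have hdiff : DifferentiableOn ℝ μ (Icc Sbar S_in) :=
      (hμ_C1.differentiableOn one_ne_zero).mono fun S hS => hSbar_pos.le.trans hS.1
    exact antitoneOn_of_deriv_nonpos (convex_Icc _ _) hdiff.continuousOn
      (hdiff.mono interior_subset) fun S hS => h3 S (interior_subset hS)
  have hκ_nonneg : 0 ≤ κ := hκ ▸ div_nonneg (sub_nonneg.2 hSstar.2.le) hSstar.1.le
  obtain ⟨z₀, C, hC, hfield⟩ := exists_closedLoop_field_bounds hSstar.1 hp0.le hDstar.le hμ_pos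
    heq hκ_nonneg hp hg ⟨hSbar_pos, hSbar.2⟩ hμ_anti hθ
  have hθ_pos : 0 < θ := by linarith
  obtain ⟨K, hK, hKθ⟩ : ∃ K, 0 ≤ K ∧ C < K * θ :=
    ⟨(C + 1) / θ, by positivity, by rw [div_mul_cancel₀ _ hθ_pos.ne']; linarith⟩
  refine ⟨(0, z₀ + K), fun x hx hx0 => ?_⟩
  have hdecay : ∀ t, 0 ≤ t → (x t).1 ≤ (x 0).1 - θ * t := fun t ht =>
    fst_le_sub_mul_of_lyapunov (K := K)
      (F := fun u => (b * (g u.2 - 1) + Dstar * g u.2 * (1 - exp u.1),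
        p u.2 * (D u - Dstar * g u.2 * exp u.1)))
      hx (fun u hu => (hfield u.2 hu u.1).1)
      (fun u hu => (hfield u.2 hu u.1).2 _ (hD_nonneg u)) hK hKθ (by simp [hx0]) ht
  rw [hx0] at hdecay
  refine ⟨hdecay, tendsto_atBot_mono' atTop ?_ (tendsto_atBot_add_const_left atTop 0
    (tendsto_neg_atBot_iff.mpr (tendsto_id.const_mul_atTop hθ_pos)))⟩
  filter_upwards [eventually_ge_atTop 0] with t ht
  simpa [sub_eq_add_neg] using hdecay t ht

/-- If there is S̄ ∈ (S*,S_in) with p0μ(S_in) < p0μ(S̄) < b and μ' ≤ 0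
on [S̄,S_in], then no non-negative locally Lipschitz feedback achieves global
stabilization: for any such feedback there is an initial condition from which
x1(t) ≤ x1(0) − θt, so x1(t) → −∞ and the solution is unbounded. -/
theorem stmt_8
    (S_in Sstar p0 b Dstar : ℝ) (μ : ℝ → ℝ)
    (hSin : 0 < S_in) (hSstar : Sstar ∈ Set.Ioo 0 S_in)
    (hp0 : 0 < p0) (hb : 0 ≤ b) (hDstar : 0 < Dstar)
    (hμ_bdd : BddAbove (Set.range μ))
    (hμ_C1 : ContDiffOn ℝ 1 μ (Set.Ici 0))
    (hμ_nonneg : ∀ S, 0 ≤ S → 0 ≤ μ S)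
    (hμ_zero : μ 0 = 0) (hμ_pos : ∀ S, 0 < S → 0 < μ S)
    (heq : p0 * μ Sstar = b + Dstar)
    (κ : ℝ) (hκ : κ = (S_in - Sstar) / Sstar)
    (p g : ℝ → ℝ)
    (hp : ∀ z, p z = κ * Real.exp (-z) + 1)
    (hg : ∀ z, g z = μ (S_in / p z) / μ Sstar)
    (Sbar : ℝ) (hSbar : Sbar ∈ Set.Ioo Sstar S_in)
    (h1 : p0 * μ S_in < p0 * μ Sbar) (h2 : p0 * μ Sbar < b)
    (h3 : ∀ S ∈ Set.Icc Sbar S_in, deriv μ S ≤ 0)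
    (θ : ℝ) (hθ : θ = b - p0 * μ Sbar) :
    ∀ D : ℝ × ℝ → ℝ, LocallyLipschitz D → (∀ x, 0 ≤ D x) →
      ∃ x0 : ℝ × ℝ, ∀ x : ℝ → ℝ × ℝ,
        (∀ t, 0 ≤ t → HasDerivAt x
          ((b * (g (x t).2 - 1) + Dstar * g (x t).2 * (1 - Real.exp (x t).1),
            p (x t).2 * (D (x t) - Dstar * g (x t).2 * Real.exp (x t).1)) : ℝ × ℝ) t) →
        x 0 = x0 →
        (∀ t, 0 ≤ t → (x t).1 ≤ x0.1 - θ * t) ∧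
        Filter.Tendsto (fun t => (x t).1) Filter.atTop Filter.atBot :=
  stmt_8_general S_in Sstar p0 b Dstar μ hSstar hp0 hDstar hμ_C1 hμ_pos heq κ hκ p g hp hg Sbar
    hSbar h2 h3 θ hθ
end

section
/- Suppose there exists S̄ ∈ (S*,S_in) with p0·μ(S_in) < p0·μ(S̄) < b and μ'(S) ≤ 0 for all S ∈ [S̄,S_in]; set θ := b − p0·μ(S̄) > 0. Let β > 0 satisfy (b+D*)·g(β) = b − θ and suppose g'(z) ≤ 0 for all z ≥ β, and let x̄2 > β satisfy g(x̄2) < g(β). Define M := max{|μ'(S_in·ξ)| : e^β/(κ+e^β) ≤ ξ ≤ 1} and G := 1 + p0·κ·S_in·M/((b+D*)(κ+e^β)). Then for every locally Lipschitz D : ℝ² → ℝ with D ≥ 0, every continuously differentiable solution x = (x1,x2) : [0,∞) → ℝ² of the closed-loop system x1' = b(g(x2)−1) + D*·g(x2)(1−e^{x1}), x2' = p(x2)(D(x) − D*·g(x2)·e^{x1}) whose initial condition satisfies x2(0) = x̄2 and θ + (b+D*)·g(x̄2) + (κ+1)·(G·b·D*/θ)·e^{x1(0)} ≤ b satisfies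 x2(t) ≥ β for all t ≥ 0. -/
/-!
While `x₂ ≥ β`, monotonicity of `g` on `[β, ∞)` gives `(b + D*) g(x₂) ≤ b - θ`, hence `x₁' ≤ -θ`
and `e^{x₁(t)} ≤ e^{x₁(0) - θ t}`. As `D ≥ 0` and `p ≤ κ + 1` there,
`x₂' ≥ -(κ + 1) D* g(β) e^{x₁(0)} e^{-θ t}`, so `x₂` can drop by at most
`(κ + 1) D* g(β) e^{x₁(0)} / θ`. The bound `|g'| ≤ G - 1` on `[β, ∞)` turns the initial condition
into the inequality that this drop is smaller than `x̄₂ - β`; a first-hitting-time argument then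
shows that `x₂` never reaches `β`.
-/

open Real Set

theorem lt_of_forall_Ico_le_imp_lt {f : ℝ → ℝ} {a t c : ℝ}
    (hf : ContinuousOn f (Icc a t)) (hat : a ≤ t)
    (hstep : ∀ T ∈ Icc a t, (∀ s ∈ Ico a T, c ≤ f s) → c < f T) : c < f t := by
  by_contra! hft
  -- `sInf A` is the first time in `[a, t]` at which `f` drops to `c`.
  set A := Icc a t ∩ f ⁻¹' Iic c
  have hA : IsClosed A := hf.preimage_isClosed_of_isClosed isClosed_Icc isClosed_Iic
  have hAbdd : BddBelow A := ⟨a, fun s hs => hs.1.1⟩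
  have hTA : sInf A ∈ A := hA.csInf_mem ⟨t, ⟨hat, le_rfl⟩, hft⟩ hAbdd
  refine (hstep _ hTA.1 fun s hs => ?_).not_ge hTA.2
  by_contra! hfs
  exact (csInf_le hAbdd ⟨⟨hs.1, hs.2.le.trans hTA.1.2⟩, hfs.le⟩).not_gt hs.2

/-- In the paper's notation, `logistic S_in κ z = S_in / p(z)`. -/
noncomputable def logistic (S κ z : ℝ) : ℝ := S / (κ * exp (-z) + 1)

section Logistic

variable {S κ : ℝ}

theorem logistic_pos (hS : 0 < S) (hκ : 0 ≤ κ) (z : ℝ) : 0 < logistic S κ z := by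
  unfold logistic; positivity

theorem logistic_eq_mul (S κ z : ℝ) : logistic S κ z = S * (exp z / (κ + exp z)) := by
  have : κ * exp (-z) + 1 = (κ + exp z) / exp z := by
    rw [exp_neg]; field_simp
  rw [logistic, this, div_div_eq_mul_div, mul_div_assoc]

theorem hasDerivAt_logistic (hκ : 0 ≤ κ) (z : ℝ) :
    HasDerivAt (logistic S κ) (S * (κ * exp (-z)) / (κ * exp (-z) + 1) ^ 2) z := by
  have hp : HasDerivAt (fun z => κ * exp (-z) + 1) (-(κ * exp (-z))) z := by
    simpa using (((hasDerivAt_id z).neg.exp).const_mul κ).add_const 1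
  exact ((hasDerivAt_const z S).div hp (by positivity)).congr_deriv (by ring)

theorem hasDerivAt_comp_logistic {μ : ℝ → ℝ} (hS : 0 < S) (hκ : 0 ≤ κ)
    (hμ : DifferentiableOn ℝ μ (Ioi 0)) (z : ℝ) :
    HasDerivAt (fun z => μ (logistic S κ z))
      (deriv μ (logistic S κ z) * (S * (κ * exp (-z)) / (κ * exp (-z) + 1) ^ 2)) z :=
  (hμ.differentiableAt (Ioi_mem_nhds (logistic_pos hS hκ z))).hasDerivAt.comp z
    (hasDerivAt_logistic hκ z)

theorem exp_div_add_exp_mem_Icc (hκ : 0 ≤ κ) {β z : ℝ} (hz : β ≤ z) :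
    exp z / (κ + exp z) ∈ Icc (exp β / (κ + exp β)) 1 := by
  constructor
  · rw [div_le_div_iff₀ (by positivity) (by positivity)]
    nlinarith [exp_le_exp.2 hz]
  · rw [div_le_one (by positivity)]
    linarith [exp_pos z]

theorem exp_neg_div_sq_le (hκ : 0 ≤ κ) {β z : ℝ} (hz : β ≤ z) :
    exp (-z) / (κ * exp (-z) + 1) ^ 2 ≤ 1 / (κ + exp β) := by
  rw [div_le_div_iff₀ (by positivity) (by positivity)]
  have hue : exp (-z) * exp β ≤ 1 := by
    rw [← exp_add]; exact exp_le_one_iff.2 (by linarith)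
  have hu : 0 < exp (-z) := exp_pos _
  nlinarith [mul_nonneg hκ hu.le, sq_nonneg (κ * exp (-z))]

theorem abs_comp_logistic_sub_le {μ : ℝ → ℝ} {M β y : ℝ} (hS : 0 < S) (hκ : 0 ≤ κ)
    (hμ : DifferentiableOn ℝ μ (Ioi 0))
    (hM : ∀ ξ ∈ Icc (exp β / (κ + exp β)) 1, |deriv μ (S * ξ)| ≤ M) (hβy : β ≤ y) :
    |μ (logistic S κ y) - μ (logistic S κ β)| ≤ κ * S * M / (κ + exp β) * (y - β) := by
  have hM0 : 0 ≤ M :=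
    (abs_nonneg _).trans (hM 1 ⟨(exp_div_add_exp_mem_Icc hκ le_rfl).2, le_rfl⟩)
  have hbound (z : ℝ) (hz : β ≤ z) :
      ‖deriv μ (logistic S κ z) * (S * (κ * exp (-z)) / (κ * exp (-z) + 1) ^ 2)‖ ≤
        κ * S * M / (κ + exp β) := by
    have hμ' : |deriv μ (logistic S κ z)| ≤ M := by
      rw [logistic_eq_mul]; exact hM _ (exp_div_add_exp_mem_Icc hκ hz)
    have hw : 0 ≤ S * (κ * exp (-z)) / (κ * exp (-z) + 1) ^ 2 := by positivity
    rw [Real.norm_eq_abs, abs_mul, abs_of_nonneg hw]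
    calc |deriv μ (logistic S κ z)| * (S * (κ * exp (-z)) / (κ * exp (-z) + 1) ^ 2)
        ≤ M * (S * (κ * exp (-z)) / (κ * exp (-z) + 1) ^ 2) := by gcongr
      _ = κ * S * M * (exp (-z) / (κ * exp (-z) + 1) ^ 2) := by ring
      _ ≤ κ * S * M * (1 / (κ + exp β)) :=
          mul_le_mul_of_nonneg_left (exp_neg_div_sq_le hκ hz) (by positivity)
      _ = κ * S * M / (κ + exp β) := by ring
  simpa [Real.norm_eq_abs] using norm_image_sub_le_of_norm_deriv_le_segment'
    (fun z _ => (hasDerivAt_comp_logistic hS hκ hμ z).hasDerivWithinAt)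
    (fun z hz => hbound z hz.1) y ⟨hβy, le_rfl⟩

end Logistic

theorem mul_exp_neg_add_one_le {κ z : ℝ} (hκ : 0 ≤ κ) (hz : 0 ≤ z) :
    κ * exp (-z) + 1 ≤ κ + 1 := by
  nlinarith [exp_le_one_iff.2 (neg_nonpos.2 hz)]

section ClosedLoop

-- `d` stands for the feedback `s ↦ D (x s)` along the trajectory.
variable {g p d x₁ x₂ : ℝ → ℝ} {b Dstar θ β P T : ℝ}

theorem closedLoop_x₁_le (hg : AntitoneOn g (Ici β)) (hg0 : ∀ z, β ≤ z → 0 ≤ g z)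
    (hD : 0 ≤ Dstar) (hbD : 0 ≤ b + Dstar) (hgβ : (b + Dstar) * g β ≤ b - θ)
    (hx₁' : ∀ s, 0 ≤ s →
      HasDerivAt x₁ (b * (g (x₂ s) - 1) + Dstar * g (x₂ s) * (1 - exp (x₁ s))) s)
    (hx₂β : ∀ s ∈ Ico 0 T, β ≤ x₂ s) : ∀ s ∈ Icc 0 T, x₁ s ≤ x₁ 0 - θ * s := by
  refine image_le_of_deriv_right_le_deriv_boundary
    (fun s hs => (hx₁' s hs.1).continuousAt.continuousWithinAt)
    (fun s hs => (hx₁' s hs.1).hasDerivWithinAt) (B' := fun _ => -θ) (by simp) (by fun_prop)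
    (fun s _ => (((hasDerivAt_id s).const_mul θ).const_sub (x₁ 0)).hasDerivWithinAt.congr_deriv
      (by simp)) fun s hs => ?_
  have hle : g (x₂ s) ≤ g β := hg self_mem_Ici (hx₂β s hs) (hx₂β s hs)
  have hnonneg : 0 ≤ Dstar * g (x₂ s) * exp (x₁ s) := by
    have := hg0 _ (hx₂β s hs); positivity
  nlinarith [mul_le_mul_of_nonneg_left hle hbD]

theorem closedLoop_x₂_ge (hg : AntitoneOn g (Ici β)) (hg0 : ∀ z, β ≤ z → 0 ≤ g z)
    (hp : ∀ z, β ≤ z → 0 ≤ p z ∧ p z ≤ P) (hd : ∀ s, 0 ≤ d s)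
    (hD : 0 ≤ Dstar) (hbD : 0 ≤ b + Dstar) (hθ : 0 < θ) (hgβ : (b + Dstar) * g β ≤ b - θ)
    (hx₁' : ∀ s, 0 ≤ s →
      HasDerivAt x₁ (b * (g (x₂ s) - 1) + Dstar * g (x₂ s) * (1 - exp (x₁ s))) s)
    (hx₂' : ∀ s, 0 ≤ s →
      HasDerivAt x₂ (p (x₂ s) * (d s - Dstar * g (x₂ s) * exp (x₁ s))) s)
    (hT : 0 ≤ T) (hx₂β : ∀ s ∈ Ico 0 T, β ≤ x₂ s) :
    x₂ 0 - P * Dstar * g β * exp (x₁ 0) / θ ≤ x₂ T := by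
  set C := P * Dstar * g β * exp (x₁ 0)
  have hP : 0 ≤ P := (hp β le_rfl).1.trans (hp β le_rfl).2
  have hgβ0 := hg0 β le_rfl
  have hC : 0 ≤ C := by positivity
  have hx₁le := closedLoop_x₁_le hg hg0 hD hbD hgβ hx₁' hx₂β
  have hlow (s : ℝ) : HasDerivAt (fun s => x₂ 0 - C / θ + C / θ * exp (-θ * s))
      (-(C * exp (-θ * s))) s :=
    (((hasDerivAt_const_mul (-θ)).exp.const_mul (C / θ)).const_add (x₂ 0 - C / θ)).congr_deriv
      (by field_simp)
  have hbound (s : ℝ) (hs : s ∈ Ico 0 T) :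
      -(C * exp (-θ * s)) ≤ p (x₂ s) * (d s - Dstar * g (x₂ s) * exp (x₁ s)) := by
    have hβs := hx₂β s hs
    obtain ⟨hp0, hpP⟩ := hp _ hβs
    have hexp : exp (x₁ s) ≤ exp (x₁ 0) * exp (-θ * s) := by
      rw [← exp_add]; exact exp_le_exp.2 (by linarith [hx₁le s (Ico_subset_Icc_self hs)])
    have hgs : g (x₂ s) ≤ g β := hg self_mem_Ici hβs hβs
    have hgs0 := hg0 _ hβs
    have : p (x₂ s) * (Dstar * g (x₂ s) * exp (x₁ s)) ≤ C * exp (-θ * s) :=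
      calc p (x₂ s) * (Dstar * g (x₂ s) * exp (x₁ s))
          ≤ P * (Dstar * g β * (exp (x₁ 0) * exp (-θ * s))) := by gcongr
        _ = C * exp (-θ * s) := by ring
    nlinarith [mul_nonneg hp0 (hd s)]
  have hcmp := image_le_of_deriv_right_le_deriv_boundary
    (fun s _ => (hlow s).continuousAt.continuousWithinAt) (fun s _ => (hlow s).hasDerivWithinAt)
    (by simp) (fun s hs => (hx₂' s hs.1).continuousAt.continuousWithinAt)
    (fun s hs => (hx₂' s hs.1).hasDerivWithinAt) hbound (right_mem_Icc.2 hT)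
  have : 0 ≤ C / θ * exp (-θ * T) := by positivity
  linarith

theorem closedLoop_lt_x₂ (hg : AntitoneOn g (Ici β)) (hg0 : ∀ z, β ≤ z → 0 ≤ g z)
    (hp : ∀ z, β ≤ z → 0 ≤ p z ∧ p z ≤ P) (hd : ∀ s, 0 ≤ d s)
    (hD : 0 ≤ Dstar) (hbD : 0 ≤ b + Dstar) (hθ : 0 < θ) (hgβ : (b + Dstar) * g β ≤ b - θ)
    (hx₁' : ∀ s, 0 ≤ s →
      HasDerivAt x₁ (b * (g (x₂ s) - 1) + Dstar * g (x₂ s) * (1 - exp (x₁ s))) s)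
    (hx₂' : ∀ s, 0 ≤ s →
      HasDerivAt x₂ (p (x₂ s) * (d s - Dstar * g (x₂ s) * exp (x₁ s))) s)
    (h0 : P * Dstar * g β * exp (x₁ 0) / θ < x₂ 0 - β) {t : ℝ} (ht : 0 ≤ t) : β < x₂ t :=
  lt_of_forall_Ico_le_imp_lt (fun s hs => (hx₂' s hs.1).continuousAt.continuousWithinAt) ht
    fun T hT hx₂β => by
      linarith [closedLoop_x₂_ge hg hg0 hp hd hD hbD hθ hgβ hx₁' hx₂' hT.1 hx₂β]

end ClosedLoop

theorem drop_lt_of_initial_condition {b Dstar θ G K E gβ gx Δ : ℝ} (hθ : 0 < θ) (hθb : θ < b)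
    (hG : 1 ≤ G) (hΔ : 0 < Δ) (hbD : 0 < b + Dstar) (hgβ : (b + Dstar) * gβ = b - θ)
    (hLip : gβ - gx ≤ (G - 1) * Δ)
    (hinit : θ + (b + Dstar) * gx + K * (G * b * Dstar / θ) * E ≤ b) :
    K * Dstar * gβ * E / θ < Δ := by
  set W := K * Dstar * E / θ
  have hgβ0 : 0 ≤ gβ := by nlinarith
  have h1 : G * b * W ≤ (b + Dstar) * ((G - 1) * Δ) := by
    have : K * (G * b * Dstar / θ) * E = G * b * W := by ring
    nlinarith [mul_le_mul_of_nonneg_left hLip hbD.le]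
  have h2 : G * b * (W * gβ) ≤ (b - θ) * (G - 1) * Δ :=
    calc G * b * (W * gβ) = G * b * W * gβ := by ring
      _ ≤ (b + Dstar) * ((G - 1) * Δ) * gβ := mul_le_mul_of_nonneg_right h1 hgβ0
      _ = (b - θ) * (G - 1) * Δ := by rw [← hgβ]; ring
  have h3 : (b - θ) * (G - 1) * Δ < G * b * Δ := by
    nlinarith [mul_nonneg (mul_nonneg hθ.le (sub_nonneg.2 hG)) hΔ.le]
  have : W * gβ < Δ := lt_of_mul_lt_mul_left (h2.trans_lt h3) (by nlinarith)
  calc K * Dstar * gβ * E / θ = W * gβ := by ring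
    _ < Δ := this

theorem stmt_9_general
    (S_in Sstar p0 b Dstar : ℝ) (μ : ℝ → ℝ)
    (hSin : 0 < S_in) (hSstar : Sstar ∈ Set.Ioo 0 S_in)
    (hp0 : 0 < p0) (hDstar : 0 < Dstar)
    (hμ_C1 : ContDiffOn ℝ 1 μ (Set.Ici 0))
    (hμ_pos : ∀ S, 0 < S → 0 < μ S)
    (heq : p0 * μ Sstar = b + Dstar)
    (κ : ℝ) (hκ : κ = (S_in - Sstar) / Sstar)
    (p g : ℝ → ℝ)
    (hp : ∀ z, p z = κ * Real.exp (-z) + 1)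
    (hg : ∀ z, g z = μ (S_in / p z) / μ Sstar)
    (Sbar : ℝ)
    (h2 : p0 * μ Sbar < b)
    (θ : ℝ) (hθ : θ = b - p0 * μ Sbar)
    (β : ℝ) (hβpos : 0 < β) (hβ : (b + Dstar) * g β = b - θ)
    (hg'β : ∀ z, β ≤ z → deriv g z ≤ 0)
    (x2bar : ℝ) (hx2bar : β < x2bar)
    (M : ℝ)
    (hM : IsGreatest ((fun ξ => |deriv μ (S_in * ξ)|) ''
            Set.Icc (Real.exp β / (κ + Real.exp β)) 1) M)
    (G : ℝ)
    (hG : G = 1 + p0 * κ * S_in * M / ((b + Dstar) * (κ + Real.exp β))) :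
    ∀ D : ℝ × ℝ → ℝ, LocallyLipschitz D → (∀ x, 0 ≤ D x) →
      ∀ x : ℝ → ℝ × ℝ,
        (∀ t, 0 ≤ t → HasDerivAt x
          ((b * (g (x t).2 - 1) + Dstar * g (x t).2 * (1 - Real.exp (x t).1),
            p (x t).2 * (D (x t) - Dstar * g (x t).2 * Real.exp (x t).1)) : ℝ × ℝ) t) →
        (x 0).2 = x2bar →
        θ + (b + Dstar) * g x2bar +
          (κ + 1) * (G * b * Dstar / θ) * Real.exp (x 0).1 ≤ b →
        ∀ t, 0 ≤ t → β ≤ (x t).2 := by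
  intro D _ hD x hx hx0 hinit t ht
  have hκ0 : 0 ≤ κ := hκ ▸ (div_pos (sub_pos.2 hSstar.2) hSstar.1).le
  have hμS : 0 < μ Sstar := hμ_pos _ hSstar.1
  have hbD : 0 < b + Dstar := heq ▸ mul_pos hp0 hμS
  have hθ0 : 0 < θ := by rw [hθ]; linarith
  have hμd : DifferentiableOn ℝ μ (Ioi 0) :=
    (hμ_C1.differentiableOn one_ne_zero).mono Ioi_subset_Ici_self
  have hgdef : g = fun z => μ (logistic S_in κ z) / μ Sstar := funext fun z => by
    rw [hg, hp]; rfl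
  have hg0 (z : ℝ) : 0 < g z := hgdef ▸ div_pos (hμ_pos _ (logistic_pos hSin hκ0 z)) hμS
  have hθb : θ < b := by nlinarith [hg0 β]
  have hgd : Differentiable ℝ g := hgdef ▸ fun z =>
    ((hasDerivAt_comp_logistic hSin hκ0 hμd z).div_const _).differentiableAt
  have hg_anti : AntitoneOn g (Ici β) := antitoneOn_of_deriv_nonpos (convex_Ici β)
    hgd.continuous.continuousOn hgd.differentiableOn fun z hz => hg'β z (interior_subset hz)
  have hM0 : 0 ≤ M := hM.1.elim fun _ hξ => hξ.2 ▸ abs_nonneg _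
  have hGsub : G - 1 = κ * S_in * M / (κ + exp β) / μ Sstar := by
    rw [hG, ← heq]; field_simp; ring
  have hLip : g β - g x2bar ≤ (G - 1) * (x2bar - β) := by
    have := abs_comp_logistic_sub_le hSin hκ0 hμd (fun ξ hξ => hM.2 ⟨ξ, hξ, rfl⟩) hx2bar.le
    rw [hgdef, hGsub, ← sub_div, div_mul_eq_mul_div, div_le_div_iff_of_pos_right hμS]
    linarith [neg_abs_le (μ (logistic S_in κ x2bar) - μ (logistic S_in κ β))]
  have hG1 : 1 ≤ G := sub_nonneg.1 (hGsub ▸ by positivity)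
  have hmargin := drop_lt_of_initial_condition hθ0 hθb hG1 (sub_pos.2 hx2bar) hbD hβ hLip hinit
  have hpb (z : ℝ) (hz : β ≤ z) : 0 ≤ p z ∧ p z ≤ κ + 1 := by
    rw [hp]; exact ⟨by positivity, mul_exp_neg_add_one_le hκ0 (hβpos.le.trans hz)⟩
  refine (closedLoop_lt_x₂ (x₁ := fun u => (x u).1) (x₂ := fun u => (x u).2)
    (d := fun u => D (x u)) hg_anti (fun z _ => (hg0 z).le) hpb (fun u => hD _)
    hDstar.le hbD.le hθ0 hβ.le (fun s hs => ?_) (fun s hs => ?_)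
    (by rw [hx0]; exact hmargin) ht).le
  · simpa using (hx s hs).hasFDerivAt.fst.hasDerivAt
  · simpa using (hx s hs).hasFDerivAt.snd.hasDerivAt

/-- Under the assumptions of Theorem 2 together with the constants β,
x̄2, M, G, every solution of the closed-loop system whose initial condition
satisfies x2(0) = x̄2 and θ + (b+D*)g(x̄2) + (κ+1)(GbD*/θ)e^{x1(0)} ≤ b
satisfies x2(t) ≥ β for all t ≥ 0. -/
theorem stmt_9
    (S_in Sstar p0 b Dstar : ℝ) (μ : ℝ → ℝ)
    (hSin : 0 < S_in) (hSstar : Sstar ∈ Set.Ioo 0 S_in)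
    (hp0 : 0 < p0) (hb : 0 ≤ b) (hDstar : 0 < Dstar)
    (hμ_bdd : BddAbove (Set.range μ))
    (hμ_C1 : ContDiffOn ℝ 1 μ (Set.Ici 0))
    (hμ_nonneg : ∀ S, 0 ≤ S → 0 ≤ μ S)
    (hμ_zero : μ 0 = 0) (hμ_pos : ∀ S, 0 < S → 0 < μ S)
    (heq : p0 * μ Sstar = b + Dstar)
    (κ : ℝ) (hκ : κ = (S_in - Sstar) / Sstar)
    (p g : ℝ → ℝ)
    (hp : ∀ z, p z = κ * Real.exp (-z) + 1)
    (hg : ∀ z, g z = μ (S_in / p z) / μ Sstar)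
    (Sbar : ℝ) (hSbar : Sbar ∈ Set.Ioo Sstar S_in)
    (h1 : p0 * μ S_in < p0 * μ Sbar) (h2 : p0 * μ Sbar < b)
    (h3 : ∀ S ∈ Set.Icc Sbar S_in, deriv μ S ≤ 0)
    (θ : ℝ) (hθ : θ = b - p0 * μ Sbar)
    (β : ℝ) (hβpos : 0 < β) (hβ : (b + Dstar) * g β = b - θ)
    (hg'β : ∀ z, β ≤ z → deriv g z ≤ 0)
    (x2bar : ℝ) (hx2bar : β < x2bar) (hgx2bar : g x2bar < g β)
    (M : ℝ)
    (hM : IsGreatest ((fun ξ => |deriv μ (S_in * ξ)|) ''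
            Set.Icc (Real.exp β / (κ + Real.exp β)) 1) M)
    (G : ℝ)
    (hG : G = 1 + p0 * κ * S_in * M / ((b + Dstar) * (κ + Real.exp β))) :
    ∀ D : ℝ × ℝ → ℝ, LocallyLipschitz D → (∀ x, 0 ≤ D x) →
      ∀ x : ℝ → ℝ × ℝ,
        (∀ t, 0 ≤ t → HasDerivAt x
          ((b * (g (x t).2 - 1) + Dstar * g (x t).2 * (1 - Real.exp (x t).1),
            p (x t).2 * (D (x t) - Dstar * g (x t).2 * Real.exp (x t).1)) : ℝ × ℝ) t) →
        (x 0).2 = x2bar →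
        θ + (b + Dstar) * g x2bar +
          (κ + 1) * (G * b * Dstar / θ) * Real.exp (x 0).1 ≤ b →
        ∀ t, 0 ≤ t → β ≤ (x t).2 :=
  stmt_9_general S_in Sstar p0 b Dstar μ hSin hSstar hp0 hDstar hμ_C1 hμ_pos heq κ hκ p g hp hg Sbar
    h2 θ hθ β hβpos hβ hg'β x2bar hx2bar M hM G hG
end

section
/- Let μ be the Haldane kinetic function μ(S) := M·S/(K + S + a·S²) with constants M, K, a > 0, and let p0 > 0, b > 0, D* > 0, S_in > 0 and S* ∈ (0, S_in) satisfy p0·μ(S*) = b + D* and p0·μ(S_in) < b. Then there exists S̄ ∈ (S*, S_in) such that p0·μ(S_in) < p0·μ(S̄) < b and μ'(S) ≤ 0 for all S ∈ [S̄, S_in]. -/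
/-!
Writing `h(S) = M S / (K + S + a S²)`, the numerator of `h'` is `M (K - a S²)`, so `h` increases
up to its peak `√(K/a)` and decreases after it. Since `p₀ h(S*) = b + D* > b > p₀ h(S_in)` with
`S* < S_in`, the peak lies below `S_in`, and `h` at `max S* √(K/a)` is still at least `h(S*)`.
The intermediate value theorem on `[max S* √(K/a), S_in]` then produces `S̄` at any level strictly
between `p₀ h(S_in)` and `b`, and on `[S̄, S_in]` we are past the peak.
-/

open Set

noncomputable def haldane (M K a S : ℝ) : ℝ := M * S / (K + S + a * S ^ 2)

namespace haldane

variable {M K a : ℝ}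

theorem denom_pos (hK : 0 < K) (ha : 0 ≤ a) {S : ℝ} (hS : 0 ≤ S) : 0 < K + S + a * S ^ 2 := by
  positivity

theorem continuousOn (hK : 0 < K) (ha : 0 ≤ a) : ContinuousOn (haldane M K a) (Ici 0) :=
  ContinuousOn.div (by fun_prop) (by fun_prop) fun _ hS => (denom_pos hK ha hS).ne'

theorem hasDerivAt {S : ℝ} (hS : K + S + a * S ^ 2 ≠ 0) :
    HasDerivAt (haldane M K a) (M * (K - a * S ^ 2) / (K + S + a * S ^ 2) ^ 2) S := by
  have hnum : HasDerivAt (fun S => M * S) M S := by simpa using (hasDerivAt_id S).const_mul M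
  have hden : HasDerivAt (fun S => K + S + a * S ^ 2) (1 + 2 * a * S) S := by
    refine (((hasDerivAt_id S).const_add K).add ((hasDerivAt_pow 2 S).const_mul a)).congr_deriv ?_
    simp only [Nat.cast_ofNat]
    ring
  exact (hnum.div hden hS).congr_deriv (by ring)

theorem lt_of_mul_lt (hM : 0 < M) (hK : 0 < K) (ha : 0 ≤ a) {x y : ℝ} (hx : 0 ≤ x)
    (hxy : x < y) (h : a * (x * y) < K) : haldane M K a x < haldane M K a y := by
  unfold haldane
  rw [div_lt_div_iff₀ (denom_pos hK ha hx) (denom_pos hK ha (hx.trans hxy.le))]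
  -- the difference of the cross products is `M (y - x) (K - a x y)`
  nlinarith [mul_pos (mul_pos hM (sub_pos.mpr hxy)) (sub_pos.mpr h)]

theorem strictMonoOn (hM : 0 < M) (hK : 0 < K) (ha : 0 < a) :
    StrictMonoOn (haldane M K a) (Icc 0 √(K / a)) := by
  intro x ⟨hx, _⟩ y ⟨_, hy⟩ hxy
  refine lt_of_mul_lt hM hK ha.le hx hxy ?_
  have hpeak : a * √(K / a) ^ 2 = K := by
    rw [Real.sq_sqrt (by positivity)]
    field_simp
  have hxy_lt : x * y < √(K / a) ^ 2 := by nlinarith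
  nlinarith

theorem deriv_nonpos (hM : 0 < M) (hK : 0 < K) (ha : 0 < a) {S : ℝ} (hS : √(K / a) ≤ S) :
    deriv (haldane M K a) S ≤ 0 := by
  have hS0 : 0 ≤ S := (Real.sqrt_nonneg _).trans hS
  rw [(hasDerivAt (denom_pos hK ha.le hS0).ne').deriv]
  refine div_nonpos_of_nonpos_of_nonneg (mul_nonpos_of_nonneg_of_nonpos hM.le ?_) (sq_nonneg _)
  have hsq : K / a ≤ S ^ 2 := (Real.sqrt_le_left hS0).mp hS
  have := (div_le_iff₀ ha).mp hsq
  linarith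

theorem exists_eq_past_peak (hM : 0 < M) (hK : 0 < K) (ha : 0 < a) {x y c : ℝ} (hx : 0 ≤ x)
    (hxy : x < y) (hc : c ∈ Ioo (haldane M K a y) (haldane M K a x)) :
    ∃ z ∈ Ioo (max x √(K / a)) y, haldane M K a z = c := by
  -- `h(x) > h(y)` with `x < y` rules out monotonicity on `[x, y]`
  have hpeak_lt : √(K / a) < y := by
    by_contra! hy
    exact (hc.1.trans hc.2).not_gt
      (strictMonoOn hM hK ha ⟨hx, hxy.le.trans hy⟩ ⟨hx.trans hxy.le, hy⟩ hxy)
  have hx_le : haldane M K a x ≤ haldane M K a (max x √(K / a)) := by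
    rcases le_total x √(K / a) with hxp | hpx
    · rw [max_eq_right hxp]
      exact (strictMonoOn hM hK ha).monotoneOn ⟨hx, hxp⟩ ⟨Real.sqrt_nonneg _, le_rfl⟩ hxp
    · rw [max_eq_left hpx]
  have hcont : ContinuousOn (haldane M K a) (Icc (max x √(K / a)) y) :=
    (continuousOn hK ha.le).mono fun z hz => hx.trans ((le_max_left _ _).trans hz.1)
  exact intermediate_value_Ioo' (max_lt hxy hpeak_lt).le hcont ⟨hc.1, hc.2.trans_le hx_le⟩

end haldane

theorem stmt_11_general
    (M K a : ℝ) (hM : 0 < M) (hK : 0 < K) (ha : 0 < a)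
    (μ : ℝ → ℝ) (hμ : ∀ S : ℝ, 0 ≤ S → μ S = M * S / (K + S + a * S^2))
    (p0 b Dstar S_in Sstar : ℝ)
    (hp0 : 0 < p0) (hDstar : 0 < Dstar)
    (hSstar : Sstar ∈ Set.Ioo 0 S_in)
    (heq : p0 * μ Sstar = b + Dstar)
    (hless : p0 * μ S_in < b) :
    ∃ Sbar ∈ Set.Ioo Sstar S_in,
      p0 * μ S_in < p0 * μ Sbar ∧ p0 * μ Sbar < b ∧
      ∀ S ∈ Set.Icc Sbar S_in, deriv μ S ≤ 0 := by
  obtain ⟨hS0, hSlt⟩ := hSstar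
  have hμh : EqOn μ (haldane M K a) (Ici 0) := fun S hS => hμ S hS
  have hin : μ S_in < b / p0 := (lt_div_iff₀' hp0).mpr hless
  have hstar : b / p0 < μ Sstar := (div_lt_iff₀' hp0).mpr (by linarith)
  set c := (μ S_in + b / p0) / 2 with hc
  obtain ⟨Sbar, ⟨hSbar_gt, hSbar_lt⟩, hSbar⟩ := haldane.exists_eq_past_peak hM hK ha hS0.le hSlt
    (c := c) (by rw [← hμh (hS0.trans hSlt).le, ← hμh hS0.le]; constructor <;> linarith [hc])
  rw [← hμh (hS0.trans (le_max_left _ _ |>.trans_lt hSbar_gt)).le] at hSbar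
  refine ⟨Sbar, ⟨(le_max_left _ _).trans_lt hSbar_gt, hSbar_lt⟩, ?_, ?_, ?_⟩
  · rw [hSbar]
    exact mul_lt_mul_of_pos_left (by linarith [hc]) hp0
  · rw [hSbar, ← mul_div_cancel₀ b hp0.ne']
    exact mul_lt_mul_of_pos_left (by linarith [hc]) hp0
  · intro S ⟨hSbar_le, _⟩
    have hpeak_lt : √(K / a) < S := (le_max_right _ _).trans_lt (hSbar_gt.trans_le hSbar_le)
    have hlocal : μ =ᶠ[nhds S] haldane M K a :=
      Filter.eventuallyEq_of_mem (Ioi_mem_nhds ((Real.sqrt_nonneg _).trans_lt hpeak_lt))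
        fun x hx => hμh (mem_Ioi.mp hx).le
    rw [hlocal.deriv_eq]
    exact haldane.deriv_nonpos hM hK ha hpeak_lt.le

/-- For Haldane kinetics μ(S) = M·S/(K + S + a·S²) with
p0·μ(S*) = b + D* and p0·μ(S_in) < b, there exists S̄ ∈ (S*,S_in) with
p0·μ(S_in) < p0·μ(S̄) < b and μ'(S) ≤ 0 on [S̄,S_in]. -/
theorem stmt_11
    (M K a : ℝ) (hM : 0 < M) (hK : 0 < K) (ha : 0 < a)
    (μ : ℝ → ℝ) (hμ : ∀ S : ℝ, 0 ≤ S → μ S = M * S / (K + S + a * S^2))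
    (p0 b Dstar S_in Sstar : ℝ)
    (hp0 : 0 < p0) (hb : 0 < b) (hDstar : 0 < Dstar) (hSin : 0 < S_in)
    (hSstar : Sstar ∈ Set.Ioo 0 S_in)
    (heq : p0 * μ Sstar = b + Dstar)
    (hless : p0 * μ S_in < b) :
    ∃ Sbar ∈ Set.Ioo Sstar S_in,
      p0 * μ S_in < p0 * μ Sbar ∧ p0 * μ Sbar < b ∧
      ∀ S ∈ Set.Icc Sbar S_in, deriv μ S ≤ 0 :=
  stmt_11_general M K a hM hK ha μ hμ p0 b Dstar S_in Sstar hp0 hDstar hSstar heq hless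
end

section
/- Suppose λ = 0, i.e., p0·μ(S*) = b + D*. Then the following are equivalent: (i) there exists φ > 1 such that b·(μ(S*)/μ(S) − 1) < D*·(1 − 1/(4φ)) for all S ∈ [S*, S_in]; (ii) p0·μ(S) > b for all S ∈ [S*, S_in]. (That is, Assumption (C) with λ = 0 is equivalent to Assumption (A).) -/
/-- When λ = 0 (i.e. p0·μ(S*) = b + D*), Assumption (C) is
equivalent to Assumption (A):
(∃ φ > 1, ∀ S ∈ [S*,S_in], b(μ(S*)/μ(S) − 1) < D*(1 − 1/(4φ))) ↔
(∀ S ∈ [S*,S_in], p0·μ(S) > b). -/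
theorem stmt_12
    (S_in Sstar p0 b Dstar : ℝ) (μ : ℝ → ℝ)
    (hSin : 0 < S_in) (hSstar : Sstar ∈ Set.Ioo 0 S_in)
    (hp0 : 0 < p0) (hb : 0 ≤ b) (hDstar : 0 < Dstar)
    (hμ_cont : ContinuousOn μ (Set.Ici 0))
    (hμ_pos : ∀ S, 0 < S → 0 < μ S)
    (heq : p0 * μ Sstar = b + Dstar) :
    (∃ φ : ℝ, 1 < φ ∧ ∀ S ∈ Set.Icc Sstar S_in,
        b * (μ Sstar / μ S - 1) < Dstar * (1 - 1 / (4 * φ))) ↔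
    (∀ S ∈ Set.Icc Sstar S_in, b < p0 * μ S) := by
  have hμstar : 0 < μ Sstar := hμ_pos _ hSstar.1
  have hpos : ∀ S ∈ Set.Icc Sstar S_in, 0 < μ S := fun S hS =>
    hμ_pos S (lt_of_lt_of_le hSstar.1 hS.1)
  constructor
  · rintro ⟨φ, hφ, h⟩ S hS
    have hμS := hpos S hS
    have h1 : b * (μ Sstar / μ S - 1) < Dstar := by
      have := h S hS
      have h4φ : 0 < 4 * φ := by linarith
      have : Dstar * (1 - 1 / (4 * φ)) < Dstar := by
        have h14 : 0 < 1 / (4 * φ) := by positivity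
        nlinarith
      linarith [h S hS]
    rw [show μ Sstar / μ S - 1 = (μ Sstar - μ S) / μ S by field_simp,
      ← mul_div_assoc] at h1
    rw [div_lt_iff₀ hμS] at h1
    nlinarith [mul_pos hμstar hμS]
  · intro hA
    -- continuous function f on compact set
    set f : ℝ → ℝ := fun S => b * (μ Sstar / μ S - 1) with hf
    have hsub : Set.Icc Sstar S_in ⊆ Set.Ici (0:ℝ) := fun x hx =>
      le_of_lt (lt_of_lt_of_le hSstar.1 hx.1)
    have hfc : ContinuousOn f (Set.Icc Sstar S_in) := by
      apply ContinuousOn.mul continuousOn_const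
      exact ContinuousOn.sub
        (ContinuousOn.div continuousOn_const (hμ_cont.mono hsub)
          (fun x hx => ne_of_gt (hpos x hx))) continuousOn_const
    have hne : (Set.Icc Sstar S_in).Nonempty :=
      Set.nonempty_Icc.mpr (le_of_lt hSstar.2)
    obtain ⟨S0, hS0, hmax⟩ := (isCompact_Icc).exists_isMaxOn hne hfc
    have hμS0 := hpos S0 hS0
    have hfS0 : f S0 < Dstar := by
      have hb' := hA S0 hS0
      have : f S0 = b * (μ Sstar - μ S0) / μ S0 := by
        rw [hf]; field_simp
      rw [this, div_lt_iff₀ hμS0]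
      nlinarith [mul_pos hμstar hμS0, mul_lt_mul_of_pos_left hb' hμstar]
    set M := f S0 with hM
    have hDM : 0 < Dstar - M := by linarith
    refine ⟨Dstar / (4 * (Dstar - M)) + 1, ?_, ?_⟩
    · have : 0 < Dstar / (4 * (Dstar - M)) := by positivity
      linarith
    · intro S hS
      have hle : f S ≤ M := hmax hS
      have hkey : Dstar / (4 * (Dstar / (4 * (Dstar - M)) + 1)) < Dstar - M := by
        rw [div_lt_iff₀ (by positivity)]
        have h1 : Dstar / (4 * (Dstar - M)) * (Dstar - M) = Dstar / 4 := by
          field_simp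
        nlinarith [h1]
      have : M < Dstar * (1 - 1 / (4 * (Dstar / (4 * (Dstar - M)) + 1))) := by
        rw [mul_sub, mul_one, mul_one_div]
        linarith
      calc b * (μ Sstar / μ S - 1) = f S := rfl
        _ ≤ M := hle
        _ < _ := this
end

section
/- Let ζ < 0 and let b ≥ 0, D* > 0, p0 > 0, q0 > 0, γ ≥ 0. Then the cubic polynomial h(s) = s³ + (b + γq0(b+D*)/(p0(b+D*)+γq0) + 2D* + ζ)·s² + (b+D*)(D* + (D*+ζ)·γq0/(p0(b+D*)+γq0) + 2ζ)·s + (b+D*)²·ζ has a real root s > 0. In particular, when ζ = μ'(S*)·X* < 0 the equilibrium's Jacobian has a positive real eigenvalue, so the equilibrium of the open-loop age-structured chemostat model is unstable when μ'(S*) < 0. -/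
/-- If ζ < 0 then the cubic characteristic polynomial h has a real
root s > 0; hence the equilibrium's Jacobian has a positive real eigenvalue and
the open-loop equilibrium is unstable when μ'(S*) < 0. -/
theorem stmt_15
    (b Dstar p0 q0 γ ζ : ℝ)
    (hb : 0 ≤ b) (hDstar : 0 < Dstar) (hp0 : 0 < p0) (hq0 : 0 < q0)
    (hγ : 0 ≤ γ) (hζ : ζ < 0) :
    ∃ s : ℝ, 0 < s ∧
      s^3 + (b + γ * q0 * (b + Dstar) / (p0 * (b + Dstar) + γ * q0) +
              2 * Dstar + ζ) * s^2 +
        (b + Dstar) * (Dstar + (Dstar + ζ) * γ * q0 /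
              (p0 * (b + Dstar) + γ * q0) + 2 * ζ) * s +
        (b + Dstar)^2 * ζ = 0 := by
  set A : ℝ := b + γ * q0 * (b + Dstar) / (p0 * (b + Dstar) + γ * q0) +
      2 * Dstar + ζ with hA
  set B : ℝ := (b + Dstar) * (Dstar + (Dstar + ζ) * γ * q0 /
      (p0 * (b + Dstar) + γ * q0) + 2 * ζ) with hB
  set C : ℝ := (b + Dstar)^2 * ζ with hC
  set f : ℝ → ℝ := fun s => s^3 + A * s^2 + B * s + C with hf
  have hcont : Continuous f := by fun_prop
  have hf0 : f 0 < 0 := by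
    have hpos : 0 < (b + Dstar)^2 := by positivity
    have : (b + Dstar)^2 * ζ < 0 := mul_neg_of_pos_of_neg hpos hζ
    simpa [hf] using this
  set M : ℝ := 1 + |A| + |B| + |C| with hM
  have hM1 : 1 ≤ M := by
    have := abs_nonneg A; have := abs_nonneg B; have := abs_nonneg C
    simp only [hM]; linarith
  have h0M : (0 : ℝ) ≤ M := by linarith
  have hfM : 0 < f M := by
    have h1 : -|A| ≤ A := neg_abs_le A
    have h2 : -|B| ≤ B := neg_abs_le B
    have h3 : -|C| ≤ C := neg_abs_le C
    have h4 : 0 ≤ |A| := abs_nonneg A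
    have h5 : 0 ≤ |B| := abs_nonneg B
    have h6 : 0 ≤ |C| := abs_nonneg C
    simp only [hf, hM]
    nlinarith [sq_nonneg (|A| + |B| + |C|), sq_nonneg M, mul_nonneg h4 h5,
      mul_nonneg h5 h6, mul_nonneg h4 h6]
  have hmem : (0 : ℝ) ∈ Set.Icc (f 0) (f M) := ⟨le_of_lt hf0, le_of_lt hfM⟩
  obtain ⟨c, hcIcc, hfc⟩ :=
    intermediate_value_Icc h0M hcont.continuousOn hmem
  refine ⟨c, ?_, hfc⟩
  rcases lt_or_eq_of_le hcIcc.1 with h | h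
  · exact h
  · exfalso; rw [← h] at hfc; exact absurd hfc (ne_of_lt hf0)
end
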